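/- arXiv:2408.13851 — 8 statements merged into one kernel-verified Lean document; each statement's English description precedes it below -/
import Mathlib

section
/- Let μ be a positive Borel probability measure on ℂ supported in the open disk of radius r, and let R > 2r. Then for all z with |z| ≥ R, the derivative of the Cauchy transform satisfies (1 − 2r/R)/(1 + r/R)⁴ ≤ |z² · (d/dz) C^μ(z)| ≤ 1/(1 − r/R)². In particular |z² (C^μ)'(z)| < 4 and (C^μ)'(z) ≠ 0 for |z| ≥ R. -/
open MeasureTheory Metric

/-!
Writing `u = y / z`, we have `z² (C^μ)'(z) = -∫ (1 - u)⁻² dμ(y)` with `‖u‖ ≤ r / R < 1 / 2` on the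
support of `μ`. The integrand has norm at most `(1 - ‖u‖)⁻²`, and its real part is
`Re ((1 - ū)²) / ‖1 - u‖⁴ ≥ (1 - 2‖u‖) / (1 + ‖u‖)⁴ > 0`; integrating against a probability
measure bounds the real part, hence the norm, of the integral from below.
-/

namespace Complex

theorem norm_inv_one_sub_sq_le {u : ℂ} {t : ℝ} (hu : ‖u‖ ≤ t) (ht : t < 1) :
    ‖((1 - u) ^ 2)⁻¹‖ ≤ 1 / (1 - t) ^ 2 := by
  have hlow : 1 - t ≤ ‖1 - u‖ := by
    linarith [norm_sub_norm_le (1 : ℂ) u, norm_one (α := ℂ)]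
  rw [norm_inv, norm_pow, ← one_div]
  exact one_div_le_one_div_of_le (by nlinarith) (pow_le_pow_left₀ (by linarith) hlow 2)

theorem le_re_inv_one_sub_sq {u : ℂ} {t : ℝ} (hu : ‖u‖ ≤ t) (ht : 2 * t ≤ 1) :
    (1 - 2 * t) / (1 + t) ^ 4 ≤ ((1 - u) ^ 2)⁻¹.re := by
  have hlow : 1 - t ≤ ‖1 - u‖ := by
    linarith [norm_sub_norm_le (1 : ℂ) u, norm_one (α := ℂ)]
  have hup : ‖1 - u‖ ≤ 1 + t := by
    linarith [norm_sub_le (1 : ℂ) u, norm_one (α := ℂ)]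
  have hre : |u.re| ≤ t := (abs_re_le_norm u).trans hu
  have hsq : u.re ^ 2 + u.im ^ 2 ≤ t ^ 2 := by
    have : u.re ^ 2 + u.im ^ 2 = ‖u‖ ^ 2 := by rw [← normSq_eq_norm_sq, normSq_apply]; ring
    rw [this]
    exact pow_le_pow_left₀ (norm_nonneg u) hu 2
  have hnum : 1 - 2 * t ≤ ((1 - u) ^ 2).re := by
    have : ((1 - u) ^ 2).re = (1 - u.re) ^ 2 - u.im ^ 2 := by simp [sq]
    rw [this]
    -- with `a = u.re`: the excess is at least `(t - a) (2 - t - a) + a²`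
    nlinarith [abs_le.mp hre, sq_nonneg u.re]
  have hden : normSq ((1 - u) ^ 2) = ‖1 - u‖ ^ 4 := by
    rw [normSq_eq_norm_sq, norm_pow]; ring
  rw [inv_re, hden]
  exact div_le_div₀ (by linarith) hnum (pow_pos (by linarith) 4)
    (pow_le_pow_left₀ (by linarith) hup 4)

end Complex

section Integrals

variable {α : Type*} [MeasurableSpace α] {μ : Measure α} [IsProbabilityMeasure μ]

theorem le_norm_integral_of_ae_le_re {g : α → ℂ} (hg : Integrable g μ) {c : ℝ}
    (hc : ∀ᵐ y ∂μ, c ≤ (g y).re) : c ≤ ‖∫ y, g y ∂μ‖ :=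
  calc c = ∫ _, c ∂μ := by simp
    _ ≤ ∫ y, (g y).re ∂μ := integral_mono_ae (integrable_const c) hg.re hc
    _ = (∫ y, g y ∂μ).re := integral_re hg
    _ ≤ ‖∫ y, g y ∂μ‖ := Complex.re_le_norm _

theorem norm_integral_inv_one_sub_sq_mem_Icc {f : α → ℂ} (hf : Measurable f) {t : ℝ}
    (ht : 2 * t < 1) (hft : ∀ᵐ y ∂μ, ‖f y‖ ≤ t) :
    ‖∫ y, ((1 - f y) ^ 2)⁻¹ ∂μ‖ ∈ Set.Icc ((1 - 2 * t) / (1 + t) ^ 4) (1 / (1 - t) ^ 2) := by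
  have hbound := hft.mono fun y hy => Complex.norm_inv_one_sub_sq_le hy (by linarith)
  refine ⟨le_norm_integral_of_ae_le_re (Integrable.of_bound (by fun_prop) _ hbound)
    (hft.mono fun y hy => Complex.le_re_inv_one_sub_sq hy ht.le), ?_⟩
  simpa using norm_integral_le_of_norm_le_const hbound

end Integrals

theorem hasDerivAt_integral_inv_sub {μ : Measure ℂ} [IsFiniteMeasure μ] {z : ℂ} {ε : ℝ}
    (hε : 0 < ε) (hμ : ∀ᵐ y ∂μ, ε ≤ ‖z - y‖) :
    HasDerivAt (fun w => ∫ y, (w - y)⁻¹ ∂μ) (∫ y, -((z - y) ^ 2)⁻¹ ∂μ) z := by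
  have hnear : ∀ᵐ y ∂μ, ∀ x ∈ ball z (ε / 2), ε / 2 ≤ ‖x - y‖ := by
    filter_upwards [hμ] with y hy x hx
    rw [mem_ball, dist_comm, dist_eq_norm] at hx
    linarith [norm_sub_le_norm_sub_add_norm_sub z x y]
  refine (hasDerivAt_integral_of_dominated_loc_of_deriv_le (F := fun w y => (w - y)⁻¹)
    (F' := fun w y => -((w - y) ^ 2)⁻¹) (bound := fun _ => 1 / (ε / 2) ^ 2)
    (ball_mem_nhds z (half_pos hε)) (.of_forall fun _ => by fun_prop) ?_ (by fun_prop) ?_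
    (integrable_const _) ?_).2
  · refine Integrable.of_bound (by fun_prop) (1 / ε) ?_
    filter_upwards [hμ] with y hy
    rw [norm_inv, ← one_div]
    exact one_div_le_one_div_of_le hε hy
  · filter_upwards [hnear] with y hy x hx
    rw [norm_neg, norm_inv, norm_pow, ← one_div]
    exact one_div_le_one_div_of_le (by positivity) (pow_le_pow_left₀ (by positivity) (hy x hx) 2)
  · filter_upwards [hnear] with y hy x hx
    have hne : x - y ≠ 0 := norm_pos_iff.mp ((half_pos hε).trans_le (hy x hx))
    exact (hasDerivAt_inv hne).comp_sub_const x y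

theorem stmt_1 (r R : ℝ) (hr : 0 < r) (hR : 2 * r < R)
    (μ : Measure ℂ) [IsProbabilityMeasure μ]
    (hsupp : μ (Metric.ball (0 : ℂ) r)ᶜ = 0) :
    ∀ z : ℂ, R ≤ ‖z‖ →
      (1 - 2 * r / R) / (1 + r / R) ^ 4 ≤
          ‖z ^ 2 * deriv (fun w : ℂ => ∫ y, (w - y)⁻¹ ∂μ) z‖ ∧
      ‖z ^ 2 * deriv (fun w : ℂ => ∫ y, (w - y)⁻¹ ∂μ) z‖ ≤ 1 / (1 - r / R) ^ 2 ∧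
      ‖z ^ 2 * deriv (fun w : ℂ => ∫ y, (w - y)⁻¹ ∂μ) z‖ < 4 ∧
      deriv (fun w : ℂ => ∫ y, (w - y)⁻¹ ∂μ) z ≠ 0 := by
  intro z hz
  have hR0 : 0 < R := by linarith
  have hz0 : z ≠ 0 := norm_pos_iff.mp (hR0.trans_le hz)
  have hμ : ∀ᵐ y ∂μ, ‖y‖ < r := by
    filter_upwards [mem_ae_iff.2 hsupp] with y hy using mem_ball_zero_iff.1 hy
  have hderiv : z ^ 2 * deriv (fun w : ℂ => ∫ y, (w - y)⁻¹ ∂μ) z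
      = -∫ y, ((1 - y / z) ^ 2)⁻¹ ∂μ := by
    have hsep : ∀ᵐ y ∂μ, R - r ≤ ‖z - y‖ :=
      hμ.mono fun y hy => by linarith [norm_sub_norm_le z y]
    rw [(hasDerivAt_integral_inv_sub (by linarith) hsep).deriv, ← integral_const_mul,
      ← integral_neg]
    congr 1 with y
    rw [one_sub_div hz0, div_pow, inv_div]
    ring
  have ht : 2 * (r / R) < 1 := by rw [← mul_div_assoc, div_lt_one hR0]; exact hR
  have hu : ∀ᵐ y ∂μ, ‖y / z‖ ≤ r / R :=
    hμ.mono fun y hy => by rw [norm_div]; exact div_le_div₀ hr.le hy.le hR0 hz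
  obtain ⟨hlow, hup⟩ := norm_integral_inv_one_sub_sq_mem_Icc (by fun_prop) ht hu
  have hnorm : ‖z ^ 2 * deriv (fun w : ℂ => ∫ y, (w - y)⁻¹ ∂μ) z‖
      = ‖∫ y, ((1 - y / z) ^ 2)⁻¹ ∂μ‖ := by rw [hderiv, norm_neg]
  have hpos : 0 < (1 - 2 * (r / R)) / (1 + r / R) ^ 4 := div_pos (by linarith) (by positivity)
  have hlt4 : 1 / (1 - r / R) ^ 2 < 4 := by
    rw [div_lt_iff₀ (by nlinarith)]
    nlinarith
  rw [hnorm, mul_div_assoc]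
  refine ⟨hlow, hup, hup.trans_lt hlt4, fun h => ?_⟩
  rw [h, mul_zero, norm_zero] at hnorm
  linarith
end

section
/- Let μ be a positive probability measure on ℂ supported in {|z| < r}. If R > (√2 + 1)·r, then the Cauchy transform C^μ is injective on the region {z : |z| > R}. -/
/-!
If `μ` is carried by `‖y‖ < r` and `z₁ ≠ z₂` lie in `‖z‖ > (√2 + 1) r`, then
`z₁ z₂ (C z₁ - C z₂) / (z₂ - z₁) = ∫ dμ(y) / ((1 - y / z₁) (1 - y / z₂))`.
Since `‖y / zᵢ‖ < √2 - 1`, we have `(1 + ‖y / z₁‖) (1 + ‖y / z₂‖) < 2`, which forces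
`Re ((1 - y / z₁) (1 - y / z₂)) > 0`; so the integrand has positive real part, the integral
is nonzero, and `C z₁ ≠ C z₂`.
-/

open MeasureTheory Metric

namespace Complex

lemma re_inv_pos {z : ℂ} (hz : 0 < z.re) : 0 < z⁻¹.re := by
  have hz₀ : z ≠ 0 := by rintro rfl; simp at hz
  rw [inv_re]
  exact div_pos hz (normSq_pos.mpr hz₀)

lemma re_one_sub_mul_one_sub_pos {a b : ℂ} (hab : (1 + ‖a‖) * (1 + ‖b‖) < 2) :
    0 < ((1 - a) * (1 - b)).re := by
  have hre : ((1 - a) * (1 - b)).re = 1 - a.re - b.re + (a * b).re := by simp; ring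
  have hab_re : -(‖a‖ * ‖b‖) ≤ (a * b).re := by
    simpa [norm_mul] using neg_le_of_abs_le (abs_re_le_norm (a * b))
  linarith [re_le_norm a, re_le_norm b]

lemma one_add_norm_div_lt_sqrt_two {r : ℝ} {y z : ℂ} (hy : ‖y‖ < r)
    (hz : (Real.sqrt 2 + 1) * r < ‖z‖) : 1 + ‖y / z‖ < Real.sqrt 2 := by
  have hsq : Real.sqrt 2 * Real.sqrt 2 = 2 := Real.mul_self_sqrt zero_le_two
  have hr : 0 < r := (norm_nonneg y).trans_lt hy
  have hz₀ : 0 < ‖z‖ := by nlinarith [Real.sqrt_nonneg 2]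
  have hs : 0 < Real.sqrt 2 - 1 := by nlinarith [Real.sqrt_nonneg 2]
  rw [norm_div, ← lt_sub_iff_add_lt', div_lt_iff₀ hz₀]
  nlinarith [mul_lt_mul_of_pos_left hz hs]

end Complex

lemma inv_one_sub_div_mul_one_sub_div {K : Type*} [Field K] {y z₁ z₂ : K} (hz₁ : z₁ ≠ 0)
    (hz₂ : z₂ ≠ 0) (hy₁ : z₁ - y ≠ 0) (hy₂ : z₂ - y ≠ 0) (hz : z₂ - z₁ ≠ 0) :
    ((1 - y / z₁) * (1 - y / z₂))⁻¹ = z₁ * z₂ / (z₂ - z₁) * ((z₁ - y)⁻¹ - (z₂ - y)⁻¹) := by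
  field_simp
  ring

lemma integral_pos_of_ae_pos {α : Type*} [MeasurableSpace α] {μ : Measure α} [NeZero μ]
    {f : α → ℝ} (hfi : Integrable f μ) (hf : ∀ᵐ x ∂μ, 0 < f x) : 0 < ∫ x, f x ∂μ := by
  have hf₀ : 0 ≤ᵐ[μ] f := hf.mono fun _ => le_of_lt
  refine (integral_nonneg_of_ae hf₀).lt_of_ne' fun h => ?_
  obtain ⟨x, hx₀, hx⟩ := (((integral_eq_zero_iff_of_nonneg_ae hf₀ hfi).mp h).and hf).exists
  exact hx.ne' hx₀

lemma integral_ne_zero_of_ae_re_pos {α : Type*} [MeasurableSpace α] {μ : Measure α} [NeZero μ]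
    {f : α → ℂ} (hfi : Integrable f μ) (hf : ∀ᵐ x ∂μ, 0 < (f x).re) : ∫ x, f x ∂μ ≠ 0 := by
  have hre : 0 < (∫ x, f x ∂μ).re := by
    have h := integral_re hfi
    simp only [RCLike.re_to_complex] at h
    exact h ▸ integral_pos_of_ae_pos hfi.re hf
  rintro h
  simp [h] at hre

lemma integrable_inv_sub_of_ae_norm_lt {μ : Measure ℂ} [IsFiniteMeasure μ] {r : ℝ} {z : ℂ}
    (hμ : ∀ᵐ y ∂μ, ‖y‖ < r) (hz : r < ‖z‖) : Integrable (fun y => (z - y)⁻¹) μ := by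
  refine .of_bound (by fun_prop) (‖z‖ - r)⁻¹ (hμ.mono fun y hy => ?_)
  rw [norm_inv]
  exact inv_anti₀ (by linarith) (by linarith [norm_sub_norm_le z y])

theorem stmt_4 (r R : ℝ) (hr : 0 < r) (hR : (Real.sqrt 2 + 1) * r < R)
    (μ : Measure ℂ) [IsProbabilityMeasure μ]
    (hsupp : μ (Metric.ball (0 : ℂ) r)ᶜ = 0) :
    Set.InjOn (fun z : ℂ => ∫ y, (z - y)⁻¹ ∂μ) {z : ℂ | R < ‖z‖} := by
  intro z₁ hz₁ z₂ hz₂ heq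
  by_contra hne
  have hμ : ∀ᵐ y ∂μ, ‖y‖ < r :=
    Filter.mem_of_superset (mem_ae_iff.mpr hsupp) fun _ => mem_ball_zero_iff.mp
  have hz₁' : (Real.sqrt 2 + 1) * r < ‖z₁‖ := hR.trans hz₁
  have hz₂' : (Real.sqrt 2 + 1) * r < ‖z₂‖ := hR.trans hz₂
  have hr_le : r ≤ (Real.sqrt 2 + 1) * r := by nlinarith [Real.sqrt_nonneg 2]
  have hi₁ := integrable_inv_sub_of_ae_norm_lt hμ (hr_le.trans_lt hz₁')
  have hi₂ := integrable_inv_sub_of_ae_norm_lt hμ (hr_le.trans_lt hz₂')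
  have hg : (fun y => ((1 - y / z₁) * (1 - y / z₂))⁻¹)
      =ᵐ[μ] fun y => z₁ * z₂ / (z₂ - z₁) * ((z₁ - y)⁻¹ - (z₂ - y)⁻¹) := by
    filter_upwards [hμ] with y hy
    have hnonzero : ∀ {z : ℂ}, (Real.sqrt 2 + 1) * r < ‖z‖ → z ≠ 0 ∧ z - y ≠ 0 := fun hz =>
      have hyz := hy.trans (hr_le.trans_lt hz)
      ⟨norm_pos_iff.mp ((norm_nonneg y).trans_lt hyz), sub_ne_zero.mpr (ne_of_apply_ne norm hyz.ne')⟩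
    obtain ⟨h₁, h₁y⟩ := hnonzero hz₁'
    obtain ⟨h₂, h₂y⟩ := hnonzero hz₂'
    exact inv_one_sub_div_mul_one_sub_div h₁ h₂ h₁y h₂y (sub_ne_zero.mpr (Ne.symm hne))
  refine integral_ne_zero_of_ae_re_pos (((hi₁.sub hi₂).const_mul _).congr hg.symm)
    (hμ.mono fun y hy => Complex.re_inv_pos (Complex.re_one_sub_mul_one_sub_pos ?_)) ?_
  · nlinarith [Complex.one_add_norm_div_lt_sqrt_two hy hz₁',
      Complex.one_add_norm_div_lt_sqrt_two hy hz₂', norm_nonneg (y / z₁), Real.sq_sqrt zero_le_two]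
  · rw [integral_congr_ae hg, integral_const_mul, integral_sub hi₁ hi₂]
    simp only at heq
    rw [heq, sub_self, mul_zero]
end

section
/- Let f_k : [0,1] → ℝ be a polynomial of degree at most k (k ≥ 2) with f_k(1) = f_k'(1) = 0, and let m_k(0) ∈ ℝ. Define m_k(t) = (1−t)^k m_k(0) − (1−t)^k ∫_0^t f_k'(u)/(1−u)^{k+1} du for t ∈ [0,1). Then m_k extends to a polynomial in t of degree at most k with m_k(1) = 0 and lim_{t→1} m_k(t)/(1−t) = f_k''(1)/(k−1). -/
/-!
Put `r = -p'`. The integrating factor `(1 - t)⁻ᵏ` turns the operator `q ↦ (1 - X) q' + k q` into a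
derivative: `d/dt (q(t) / (1 - t)ᵏ) = ((1 - t) q'(t) + k q(t)) / (1 - t)ᵏ⁺¹`. So if a polynomial `q`
solves `(1 - X) q' + k q = r` with `q(0) = m(0)`, the integral in the definition of `m` is
`m(0) - q(t) / (1 - t)ᵏ`, and `m = q` on `[0, 1)`. Such a `q` exists: in the basis `(X - 1)ʲ` the
operator is diagonal with eigenvalues `k - j`, `deg r < k`, and `(1 - X)ᵏ` spans its kernel.
Evaluating the equation and its derivative at `1` gives `k q(1) = -p'(1) = 0` and
`(k - 1) q'(1) = -p''(1)`, while `m(t) / (1 - t) = -(q(t) - q(1)) / (t - 1) → -q'(1)`.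
-/

open Set Polynomial Filter Topology

namespace Polynomial

variable {R : Type*}

section CommRing

variable [CommRing R]

noncomputable def odeOp (k : ℕ) : R[X] →ₗ[R] R[X] :=
  LinearMap.mulLeft R (1 - X) ∘ₗ derivative + k • LinearMap.id

lemma odeOp_apply (k : ℕ) (q : R[X]) : odeOp k q = (1 - X) * derivative q + C (k : R) * q := by
  simp [odeOp, nsmul_eq_mul]

lemma odeOp_X_sub_one_pow (k j : ℕ) :
    odeOp k ((X - C 1 : R[X]) ^ j) = C ((k : R) - j) * (X - C 1) ^ j := by
  rw [odeOp_apply, derivative_X_sub_C_pow]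
  rcases j with _ | j
  · simp
  · simp only [C_sub, C_1, Nat.cast_add, Nat.cast_one, map_natCast, add_tsub_cancel_right, pow_succ]
    ring

lemma odeOp_one_sub_X_pow (k : ℕ) : odeOp k ((1 - X : R[X]) ^ k) = 0 := by
  have h : (1 - X : R[X]) ^ k = C ((-1) ^ k) * (X - C 1) ^ k := by
    rw [C_pow, C_neg, C_1, ← mul_pow]; ring
  rw [h, ← smul_eq_C_mul, map_smul, odeOp_X_sub_one_pow, sub_self, C_0, zero_mul, smul_zero]

lemma eval_one_odeOp (k : ℕ) (q : R[X]) : (odeOp k q).eval 1 = k * q.eval 1 := by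
  simp [odeOp_apply]

lemma eval_one_derivative_odeOp (k : ℕ) (q : R[X]) :
    (derivative (odeOp k q)).eval 1 = ((k : R) - 1) * (derivative q).eval 1 := by
  simp [odeOp_apply]
  ring

end CommRing

section Field

variable [Field R] [CharZero R]

lemma exists_odeOp_eq {k : ℕ} {r : R[X]} (hr : r.natDegree < k) (a : R) :
    ∃ q : R[X], q.natDegree ≤ k ∧ odeOp k q = r ∧ q.eval 0 = a := by
  set q₀ : R[X] := ∑ j ∈ Finset.range k, C ((taylor 1 r).coeff j / ((k : R) - j)) * (X - C 1) ^ j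
  have hq₀ : odeOp k q₀ = r := by
    conv_rhs => rw [← sum_taylor_eq r 1,
      sum_over_range' _ (fun _ => by simp) k (by rwa [natDegree_taylor])]
    simp only [q₀, map_sum, ← smul_eq_C_mul, map_smul, odeOp_X_sub_one_pow]
    refine Finset.sum_congr rfl fun j hj => ?_
    have : (k : R) - j ≠ 0 := sub_ne_zero.2 (by exact_mod_cast (Finset.mem_range.1 hj).ne')
    rw [smul_eq_C_mul, smul_eq_C_mul, smul_eq_C_mul, ← mul_assoc, ← C_mul, div_mul_cancel₀ _ this]
  refine ⟨q₀ + C (a - q₀.eval 0) * (1 - X) ^ k, ?_, ?_, by simp⟩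
  · refine natDegree_add_le_of_degree_le ?_ ?_
    · refine natDegree_sum_le_of_forall_le _ _ fun j hj => ?_
      exact (natDegree_C_mul_le _ _).trans <|
        (natDegree_pow_le_of_le _ (natDegree_X_sub_C_le _)).trans
          (by simpa using (Finset.mem_range.1 hj).le)
    · exact (natDegree_C_mul_le _ _).trans <|
        (natDegree_pow_le_of_le _ (by compute_degree!)).trans (by simp)
  · rw [← smul_eq_C_mul, map_add, map_smul, odeOp_one_sub_X_pow, smul_zero, add_zero, hq₀]

end Field

lemma hasDerivAt_eval_div_one_sub_pow (k : ℕ) (q : ℝ[X]) {u : ℝ} (hu : u ≠ 1) :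
    HasDerivAt (fun t => q.eval t / (1 - t) ^ k) ((odeOp k q).eval u / (1 - u) ^ (k + 1)) u := by
  have hu' : 1 - u ≠ 0 := sub_ne_zero.2 hu.symm
  refine ((q.hasDerivAt u).div (((hasDerivAt_id u).const_sub 1).pow k)
    (pow_ne_zero k hu')).congr_deriv ?_
  rw [odeOp_apply]
  simp only [eval_add, eval_mul, eval_sub, eval_one, eval_X, eval_C, Pi.pow_apply, id]
  rcases k with _ | k
  · simp [hu']
  · field_simp
    push_cast
    ring

lemma integral_eval_odeOp_div (k : ℕ) (q : ℝ[X]) {t : ℝ} (ht : t < 1) :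
    ∫ u in (0 : ℝ)..t, (odeOp k q).eval u / (1 - u) ^ (k + 1) =
      q.eval t / (1 - t) ^ k - q.eval 0 := by
  have hlt : ∀ u ∈ uIcc 0 t, u < 1 := fun u hu =>
    hu.2.trans_lt (max_lt zero_lt_one ht)
  have := intervalIntegral.integral_eq_sub_of_hasDerivAt
    (fun u hu => hasDerivAt_eval_div_one_sub_pow k q (hlt u hu).ne)
    (ContinuousOn.intervalIntegrable <| (odeOp k q).continuousOn.div (by fun_prop)
      fun u hu => pow_ne_zero _ (sub_ne_zero.2 (hlt u hu).ne'))
  simpa using this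

lemma tendsto_eval_div_one_sub {q : ℝ[X]} (hq : q.eval 1 = 0) :
    Tendsto (fun t => q.eval t / (1 - t)) (𝓝[≠] 1) (𝓝 (-(derivative q).eval 1)) := by
  refine ((q.hasDerivAt 1).tendsto_slope.neg).congr fun t => ?_
  rw [slope_def_field, hq, sub_zero, ← neg_sub 1 t, div_neg, neg_neg]

end Polynomial

theorem stmt_6_general (k : ℕ) (hk : 2 ≤ k) (p : Polynomial ℝ)
    (hdeg : p.natDegree ≤ k)
    (h1' : p.derivative.eval 1 = 0)
    (mk0 : ℝ) (m : ℝ → ℝ)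
    (hm : ∀ t ∈ Ico (0:ℝ) 1,
      m t = (1 - t) ^ k * mk0 -
        (1 - t) ^ k * ∫ u in (0:ℝ)..t, p.derivative.eval u / (1 - u) ^ (k + 1)) :
    ∃ q : Polynomial ℝ, q.natDegree ≤ k ∧
      (∀ t ∈ Ico (0:ℝ) 1, q.eval t = m t) ∧
      q.eval 1 = 0 ∧
      Filter.Tendsto (fun t => m t / (1 - t)) (nhdsWithin 1 (Iio (1:ℝ)))
        (nhds ((p.derivative.derivative.eval 1) / ((k : ℝ) - 1))) := by
  obtain ⟨q, hq_deg, hq, hq0⟩ := exists_odeOp_eq (r := -derivative p) (k := k)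
    (by rw [natDegree_neg]; exact (natDegree_derivative_le p).trans_lt (by omega)) mk0
  have hqm : ∀ t ∈ Ico (0 : ℝ) 1, q.eval t = m t := by
    intro t ht
    have hint := integral_eval_odeOp_div k q ht.2
    simp only [hq, eval_neg, neg_div, intervalIntegral.integral_neg, hq0] at hint
    have : (1 - t) ^ k ≠ 0 := pow_ne_zero _ (sub_ne_zero.2 ht.2.ne')
    field_simp at hint
    rw [hm t ht]
    linarith
  have hq1 : q.eval 1 = 0 := by
    have h := eval_one_odeOp k q
    rw [hq, eval_neg, h1', neg_zero] at h
    exact (mul_eq_zero.1 h.symm).resolve_left (by norm_cast; omega)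
  have hk1 : (k : ℝ) - 1 ≠ 0 := sub_ne_zero.2 (by norm_cast; omega)
  have hlim : -(derivative q).eval 1 = p.derivative.derivative.eval 1 / ((k : ℝ) - 1) := by
    have h := eval_one_derivative_odeOp k q
    rw [hq, derivative_neg, eval_neg] at h
    field_simp
    linarith
  refine ⟨q, hq_deg, hqm, hq1, ?_⟩
  rw [← hlim]
  refine ((tendsto_eval_div_one_sub hq1).mono_left (nhdsLT_le_nhdsNE 1)).congr' ?_
  filter_upwards [Ioo_mem_nhdsLT zero_lt_one] with t ht
  rw [hqm t (Ioo_subset_Ico_self ht)]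

theorem stmt_6 (k : ℕ) (hk : 2 ≤ k) (p : Polynomial ℝ)
    (hdeg : p.natDegree ≤ k)
    (h1 : p.eval 1 = 0) (h1' : p.derivative.eval 1 = 0)
    (mk0 : ℝ) (m : ℝ → ℝ)
    (hm : ∀ t ∈ Ico (0:ℝ) 1,
      m t = (1 - t) ^ k * mk0 -
        (1 - t) ^ k * ∫ u in (0:ℝ)..t, p.derivative.eval u / (1 - u) ^ (k + 1)) :
    ∃ q : Polynomial ℝ, q.natDegree ≤ k ∧
      (∀ t ∈ Ico (0:ℝ) 1, q.eval t = m t) ∧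
      q.eval 1 = 0 ∧
      Filter.Tendsto (fun t => m t / (1 - t)) (nhdsWithin 1 (Iio (1:ℝ)))
        (nhds ((p.derivative.derivative.eval 1) / ((k : ℝ) - 1))) :=
  stmt_6_general k hk p hdeg h1' mk0 m hm
end

section
/- Let f be holomorphic on the closed disk {|z| ≤ R} with |f(z)| ≤ M there, f(0) = 0, and f'(0) = c > 0. Set r₁ = min{R/2, cR²/(4M)}. Then for every r ≤ r₁, f is injective on the closed disk {|z| ≤ r}, and the image f({|z| ≤ r}) contains the closed disk {|w| ≤ cr/2}. -/
open Metric Set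
open scoped NNReal Real

/-! Write `f z = c z + h z` with `h z = ∑_{n ≥ 2} aₙ zⁿ`. The Cauchy inequalities `‖aₙ‖ ≤ M / Rⁿ`
give `c ≤ M / R`, so the hypothesis on `r` forces `4 r ≤ R` and `M r / R² ≤ c / 4`; summing
geometric series in `r / R ≤ 1 / 4` then shows that on the disk of radius `r` the remainder `h` is
`(7 / 9) c`-Lipschitz and bounded by `c r / 3`. The Lipschitz bound makes `f` injective there, and
for `‖w‖ ≤ c r / 2` both bounds make `z ↦ (w - h z) / c` a contraction of that disk into itself,
whose fixed point solves `f z = w` (Banach's fixed point theorem replaces Rouché's theorem). -/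

theorem norm_pow_sub_pow_le {A : Type*} [SeminormedCommRing A] [NormOneClass A] {r : ℝ}
    {z w : A} (hz : ‖z‖ ≤ r) (hw : ‖w‖ ≤ r) (n : ℕ) :
    ‖z ^ n - w ^ n‖ ≤ n * r ^ (n - 1) * ‖z - w‖ := by
  rw [← geom_sum₂_mul]
  refine (norm_mul_le _ _).trans (mul_le_mul_of_nonneg_right ?_ (norm_nonneg _))
  refine (norm_sum_le _ _).trans ?_
  have hterm : ∀ i ∈ Finset.range n, ‖z ^ i * w ^ (n - 1 - i)‖ ≤ r ^ (n - 1) := by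
    intro i hi
    have hr : 0 ≤ r := (norm_nonneg z).trans hz
    calc ‖z ^ i * w ^ (n - 1 - i)‖ ≤ ‖z‖ ^ i * ‖w‖ ^ (n - 1 - i) :=
          (norm_mul_le _ _).trans (mul_le_mul (norm_pow_le _ _) (norm_pow_le _ _)
            (norm_nonneg _) (by positivity))
      _ ≤ r ^ i * r ^ (n - 1 - i) := by gcongr
      _ = r ^ (n - 1) := by rw [← pow_add, Nat.add_sub_cancel' (by grind)]
  simpa using Finset.sum_le_sum hterm

theorem norm_cauchyPowerSeries_le_of_forall_mem_sphere {E : Type*} [NormedAddCommGroup E]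
    [NormedSpace ℂ E] {f : ℂ → E} {c : ℂ} {R M : ℝ} (hR : 0 ≤ R)
    (hf : ∀ z ∈ sphere c R, ‖f z‖ ≤ M) (n : ℕ) :
    ‖cauchyPowerSeries f c R n‖ ≤ M / R ^ n := by
  have hint : ∫ θ in (0 : ℝ)..2 * π, ‖f (circleMap c R θ)‖ ≤ 2 * π * M := by
    refine (le_abs_self _).trans ?_
    simpa [abs_of_pos Real.pi_pos, mul_comm] using
      intervalIntegral.norm_integral_le_of_norm_le_const (a := 0) (b := 2 * π)
        (fun θ _ => (norm_norm (f (circleMap c R θ))).trans_le (hf _ (circleMap_mem_sphere c hR θ)))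
  calc ‖cauchyPowerSeries f c R n‖
      ≤ ((2 * π)⁻¹ * ∫ θ in (0 : ℝ)..2 * π, ‖f (circleMap c R θ)‖) * |R|⁻¹ ^ n :=
        norm_cauchyPowerSeries_le f c R n
    _ ≤ ((2 * π)⁻¹ * (2 * π * M)) * |R|⁻¹ ^ n := by gcongr
    _ = M / R ^ n := by
        rw [abs_of_nonneg hR, inv_mul_cancel_left₀ Real.two_pi_pos.ne', inv_pow, div_eq_mul_inv]

theorem pow_succ_mul_div_pow_add_two_le {M r R : ℝ} (hM : 0 ≤ M) (hr : 0 ≤ r) (hR : 0 < R)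
    (hrR : 4 * r ≤ R) (n : ℕ) : r ^ (n + 1) * (M / R ^ (n + 2)) ≤ M * r / R ^ 2 * (1 / 4) ^ n := by
  calc r ^ (n + 1) * (M / R ^ (n + 2)) = M * r / R ^ 2 * (r / R) ^ n := by
        rw [div_pow]; field_simp; ring
    _ ≤ M * r / R ^ 2 * (1 / 4) ^ n := by
        refine mul_le_mul_of_nonneg_left (pow_le_pow_left₀ (by positivity) ?_ n) (by positivity)
        rw [div_le_iff₀ hR]; linarith

section PowerSeriesRemainder

variable {𝕜 E : Type*} [NontriviallyNormedField 𝕜] [NormedAddCommGroup E] [NormedSpace 𝕜 E]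
  {f : 𝕜 → E} {p : FormalMultilinearSeries 𝕜 𝕜 E} {R : ℝ≥0} {M r : ℝ} {z w : 𝕜}

theorem HasFPowerSeriesOnBall.hasSum_coeff_add_two (hf : HasFPowerSeriesOnBall f p 0 R)
    (hz : ‖z‖ < R) :
    HasSum (fun n => z ^ (n + 2) • p.coeff (n + 2)) (f z - p.coeff 0 - z • p.coeff 1) := by
  have hsum := hf.hasSum (mem_eball_zero_iff.2 (by exact_mod_cast hz))
  simp only [FormalMultilinearSeries.apply_eq_pow_smul_coeff, zero_add] at hsum
  simpa [Finset.sum_range_succ, sub_sub] using (hasSum_nat_add_iff' 2).2 hsum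

theorem HasFPowerSeriesOnBall.norm_sub_coeff_zero_sub_smul_coeff_one_le
    (hf : HasFPowerSeriesOnBall f p 0 R) (hp : ∀ n, ‖p n‖ ≤ M / R ^ n) (hrR : 4 * r ≤ R)
    (hz : ‖z‖ ≤ r) : ‖f z - p.coeff 0 - z • p.coeff 1‖ ≤ M * r ^ 2 / R ^ 2 * (4 / 3) := by
  have hr : 0 ≤ r := (norm_nonneg z).trans hz
  have hM : 0 ≤ M := by simpa using (norm_nonneg _).trans (hp 0)
  have hR : (0 : ℝ) < R := NNReal.coe_pos.2 (ENNReal.coe_pos.1 hf.r_pos)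
  have hgeom := (hasSum_geometric_of_lt_one (r := (1 / 4 : ℝ)) (by norm_num) (by norm_num)).mul_left
    (M * r ^ 2 / R ^ 2)
  rw [show (1 - 1 / 4 : ℝ)⁻¹ = 4 / 3 by norm_num] at hgeom
  refine (hf.hasSum_coeff_add_two (by linarith)).norm_le_of_bounded hgeom fun n => ?_
  rw [norm_smul, norm_pow, ← FormalMultilinearSeries.norm_apply_eq_norm_coef]
  calc ‖z‖ ^ (n + 2) * ‖p (n + 2)‖ ≤ r * (r ^ (n + 1) * (M / R ^ (n + 2))) := by
        rw [← mul_assoc, ← pow_succ']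
        gcongr
        exact hp _
    _ ≤ r * (M * r / R ^ 2 * (1 / 4) ^ n) :=
        mul_le_mul_of_nonneg_left (pow_succ_mul_div_pow_add_two_le hM hr hR hrR n) hr
    _ = M * r ^ 2 / R ^ 2 * (1 / 4) ^ n := by ring

-- `28 / 9 = ∑ (n + 2) / 4 ^ n`, from `|zⁿ⁺² - wⁿ⁺²| ≤ (n + 2) rⁿ⁺¹ |z - w|`.
theorem HasFPowerSeriesOnBall.lipschitzOnWith_sub_smul_coeff_one
    (hf : HasFPowerSeriesOnBall f p 0 R) (hp : ∀ n, ‖p n‖ ≤ M / R ^ n) (hrR : 4 * r ≤ R) :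
    LipschitzOnWith (M * r / R ^ 2 * (28 / 9)).toNNReal (fun z => f z - z • p.coeff 1)
      (closedBall 0 r) := by
  refine LipschitzOnWith.of_dist_le' fun z hz w hw => ?_
  rw [mem_closedBall_zero_iff] at hz hw
  have hr : 0 ≤ r := (norm_nonneg z).trans hz
  have hM : 0 ≤ M := by simpa using (norm_nonneg _).trans (hp 0)
  have hR : (0 : ℝ) < R := NNReal.coe_pos.2 (ENNReal.coe_pos.1 hf.r_pos)
  have hdiff := (hf.hasSum_coeff_add_two (z := z) (by linarith)).sub
    (hf.hasSum_coeff_add_two (z := w) (by linarith))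
  have hgeom := ((hasSum_coe_mul_geometric_of_norm_lt_one (r := (1 / 4 : ℝ)) (by norm_num)).add
    ((hasSum_geometric_of_lt_one (r := (1 / 4 : ℝ)) (by norm_num) (by norm_num)).mul_left 2)).mul_left
    (M * r / R ^ 2 * ‖z - w‖)
  have hval : (f z - p.coeff 0 - z • p.coeff 1) - (f w - p.coeff 0 - w • p.coeff 1) =
      (f z - z • p.coeff 1) - (f w - w • p.coeff 1) := by abel
  rw [hval] at hdiff
  rw [dist_eq_norm, dist_eq_norm]
  refine (hdiff.norm_le_of_bounded hgeom fun n => ?_).trans_eq (by norm_num; ring)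
  rw [← sub_smul, norm_smul, ← FormalMultilinearSeries.norm_apply_eq_norm_coef]
  calc ‖z ^ (n + 2) - w ^ (n + 2)‖ * ‖p (n + 2)‖
      ≤ ((n + 2 : ℕ) * r ^ (n + 1) * ‖z - w‖) * (M / R ^ (n + 2)) :=
        mul_le_mul (norm_pow_sub_pow_le hz hw (n + 2)) (hp _) (norm_nonneg _) (by positivity)
    _ = ‖z - w‖ * (n + 2) * (r ^ (n + 1) * (M / R ^ (n + 2))) := by push_cast; ring
    _ ≤ ‖z - w‖ * (n + 2) * (M * r / R ^ 2 * (1 / 4) ^ n) := by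
        have := pow_succ_mul_div_pow_add_two_le hM hr hR hrR n
        gcongr
    _ = M * r / R ^ 2 * ‖z - w‖ * (n * (1 / 4) ^ n + 2 * (1 / 4) ^ n) := by ring

end PowerSeriesRemainder

section PerturbationOfHomothety

variable {𝕜 E : Type*} [NontriviallyNormedField 𝕜] [NormedAddCommGroup E] [NormedSpace 𝕜 E]
  {f : E → E} {c : 𝕜} {K : ℝ≥0}

theorem injOn_of_lipschitzOnWith_sub_smul {s : Set E} (hK : (K : ℝ) < ‖c‖)
    (hf : LipschitzOnWith K (fun z => f z - c • z) s) : InjOn f s := by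
  intro z hz w hw hfzw
  have hdist := hf.dist_le_mul z hz w hw
  rw [dist_eq_norm, dist_eq_norm, hfzw, sub_sub_sub_cancel_left, ← smul_sub, norm_smul,
    norm_sub_rev] at hdist
  by_contra hne
  have : 0 < ‖z - w‖ := norm_pos_iff.2 (sub_ne_zero.2 hne)
  nlinarith

theorem closedBall_subset_image_of_lipschitzOnWith_sub_smul [CompleteSpace E] {r ρ ε : ℝ}
    (hr : 0 ≤ r) (hK : (K : ℝ) < ‖c‖)
    (hf : LipschitzOnWith K (fun z => f z - c • z) (closedBall 0 r))
    (hρ : ∀ z ∈ closedBall 0 r, ‖f z - c • z‖ ≤ ρ) (hε : ε + ρ ≤ ‖c‖ * r) :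
    closedBall 0 ε ⊆ f '' closedBall 0 r := by
  intro w hw
  have hc : 0 < ‖c‖ := K.coe_nonneg.trans_lt hK
  have hc₀ : c ≠ 0 := norm_pos_iff.1 hc
  set φ : E → E := fun z => c⁻¹ • (w - (f z - c • z)) with hφ
  have hmaps : MapsTo φ (closedBall 0 r) (closedBall 0 r) := by
    intro z hz
    rw [mem_closedBall_zero_iff] at hw ⊢
    rw [norm_smul, norm_inv, inv_mul_le_iff₀ hc]
    linarith [norm_sub_le w (f z - c • z), hρ z hz]
  have hcontr : ContractingWith (K / ‖c‖₊) (hmaps.restrict φ _ _) := by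
    refine ⟨?_, ?_⟩
    · rwa [div_lt_one (by simpa using hc), ← NNReal.coe_lt_coe]
    · refine LipschitzOnWith.mapsToRestrict hmaps ?_
      refine LipschitzOnWith.of_dist_le_mul fun x hx y hy => ?_
      rw [dist_eq_norm, hφ, ← smul_sub, sub_sub_sub_cancel_left, norm_smul, norm_inv,
        ← dist_eq_norm, dist_comm, NNReal.coe_div, coe_nnnorm, div_eq_inv_mul, mul_assoc]
      gcongr
      exact hf.dist_le_mul x hx y hy
  obtain ⟨z, hz, hfix, -⟩ := ContractingWith.exists_fixedPoint' isClosed_closedBall.isComplete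
    hmaps hcontr (mem_closedBall_self hr) (edist_ne_top _ _)
  refine ⟨z, hz, ?_⟩
  have := hfix.eq
  simp only [hφ, smul_sub, inv_smul_smul₀ hc₀] at this
  have hzero : c⁻¹ • (w - f z) = 0 := by linear_combination (norm := module) this
  exact (sub_eq_zero.1 ((smul_eq_zero.1 hzero).resolve_left (inv_ne_zero hc₀))).symm

end PerturbationOfHomothety

section OneDimensional

variable {𝕜 : Type*} [NontriviallyNormedField 𝕜] {f : 𝕜 → 𝕜} {p : FormalMultilinearSeries 𝕜 𝕜 𝕜}
  {R : ℝ≥0} {M r : ℝ}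

theorem HasFPowerSeriesOnBall.lipschitzOnWith_sub_coeff_one_smul
    (hf : HasFPowerSeriesOnBall f p 0 R) (hp : ∀ n, ‖p n‖ ≤ M / R ^ n) (hrR : 4 * r ≤ R)
    (hMr : M * r / R ^ 2 ≤ ‖p.coeff 1‖ / 4) :
    LipschitzOnWith (7 / 9 * ‖p.coeff 1‖).toNNReal (fun z => f z - p.coeff 1 • z)
      (closedBall 0 r) := by
  have := (hf.lipschitzOnWith_sub_smul_coeff_one hp hrR).weaken
    (Real.toNNReal_le_toNNReal (show M * r / R ^ 2 * (28 / 9) ≤ 7 / 9 * ‖p.coeff 1‖ by linarith))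
  simpa only [smul_eq_mul, mul_comm] using this

theorem HasFPowerSeriesOnBall.injOn_closedBall (hf : HasFPowerSeriesOnBall f p 0 R)
    (hp : ∀ n, ‖p n‖ ≤ M / R ^ n) (hrR : 4 * r ≤ R) (hMr : M * r / R ^ 2 ≤ ‖p.coeff 1‖ / 4)
    (hp1 : p.coeff 1 ≠ 0) : InjOn f (closedBall 0 r) := by
  refine injOn_of_lipschitzOnWith_sub_smul ?_ (hf.lipschitzOnWith_sub_coeff_one_smul hp hrR hMr)
  rw [Real.coe_toNNReal _ (by positivity)]
  linarith [norm_pos_iff.2 hp1]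

theorem HasFPowerSeriesOnBall.closedBall_subset_image [CompleteSpace 𝕜]
    (hf : HasFPowerSeriesOnBall f p 0 R) (hp : ∀ n, ‖p n‖ ≤ M / R ^ n) (hr : 0 ≤ r)
    (hrR : 4 * r ≤ R) (hMr : M * r / R ^ 2 ≤ ‖p.coeff 1‖ / 4) (hp0 : p.coeff 0 = 0)
    (hp1 : p.coeff 1 ≠ 0) : closedBall 0 (‖p.coeff 1‖ * r / 2) ⊆ f '' closedBall 0 r := by
  have hp1' := norm_pos_iff.2 hp1
  refine closedBall_subset_image_of_lipschitzOnWith_sub_smul hr ?_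
    (hf.lipschitzOnWith_sub_coeff_one_smul hp hrR hMr) (ρ := ‖p.coeff 1‖ * r / 3) ?_ ?_
  · rw [Real.coe_toNNReal _ (by positivity)]
    linarith
  · intro z hz
    have := hf.norm_sub_coeff_zero_sub_smul_coeff_one_le hp hrR (mem_closedBall_zero_iff.1 hz)
    rw [hp0, sub_zero, smul_eq_mul, mul_comm z] at this
    rw [smul_eq_mul]
    calc ‖f z - p.coeff 1 * z‖ ≤ M * r / R ^ 2 * r * (4 / 3) := this.trans_eq (by ring)
      _ ≤ ‖p.coeff 1‖ / 4 * r * (4 / 3) := by gcongr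
      _ = ‖p.coeff 1‖ * r / 3 := by ring
  · nlinarith

end OneDimensional

theorem stmt_7_general (R M c : ℝ) (hR : 0 < R) (hc : 0 < c)
    (f : ℂ → ℂ) (hf : DifferentiableOn ℂ f (closedBall (0:ℂ) R))
    (hbound : ∀ z ∈ closedBall (0:ℂ) R, ‖f z‖ ≤ M)
    (hf0 : f 0 = 0) (hf' : deriv f 0 = (c : ℂ)) :
    ∀ r : ℝ, 0 < r → r ≤ min (R / 2) (c * R ^ 2 / (4 * M)) →
      Set.InjOn f (closedBall (0:ℂ) r) ∧
      closedBall (0:ℂ) (c * r / 2) ⊆ f '' closedBall (0:ℂ) r := by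
  intro r hr hrM
  lift R to ℝ≥0 using hR.le
  have hps := hf.hasFPowerSeriesOnBall (by exact_mod_cast hR)
  set p := cauchyPowerSeries f 0 R
  have hpM : ∀ n, ‖p n‖ ≤ M / R ^ n := norm_cauchyPowerSeries_le_of_forall_mem_sphere R.coe_nonneg
    fun z hz => hbound z (sphere_subset_closedBall hz)
  have hp0 : p.coeff 0 = 0 := (hps.coeff_zero 1).trans hf0
  have hp1 : ‖p.coeff 1‖ = c := by
    rw [show p.coeff 1 = c from hps.hasFPowerSeriesAt.deriv.symm.trans hf', Complex.norm_real,
      Real.norm_of_nonneg hc.le]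
  have hcR : c * R ≤ M := by
    have := hpM 1
    rwa [FormalMultilinearSeries.norm_apply_eq_norm_coef, hp1, pow_one, le_div_iff₀ hR] at this
  have hM : 0 < M := (mul_pos hc hR).trans_le hcR
  have hrM' : r * (4 * M) ≤ c * R ^ 2 := (le_div_iff₀ (by positivity)).1 (hrM.trans (min_le_right _ _))
  have hMr : M * r / R ^ 2 ≤ ‖p.coeff 1‖ / 4 := by
    rw [hp1, div_le_iff₀ (by positivity)]
    linarith
  have h4r : 4 * r ≤ R := by nlinarith [mul_le_mul_of_nonneg_right hcR hr.le, mul_pos hc hR]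
  have hp1₀ : p.coeff 1 ≠ 0 := norm_ne_zero_iff.1 (hp1.trans_ne hc.ne')
  refine ⟨hps.injOn_closedBall hpM h4r hMr hp1₀, ?_⟩
  simpa only [hp1] using hps.closedBall_subset_image hpM hr.le h4r hMr hp0 hp1₀

theorem stmt_7 (R M c : ℝ) (hR : 0 < R) (hM : 0 < M) (hc : 0 < c)
    (f : ℂ → ℂ) (hf : DifferentiableOn ℂ f (closedBall (0:ℂ) R))
    (hbound : ∀ z ∈ closedBall (0:ℂ) R, ‖f z‖ ≤ M)
    (hf0 : f 0 = 0) (hf' : deriv f 0 = (c : ℂ)) :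
    ∀ r : ℝ, 0 < r → r ≤ min (R / 2) (c * R ^ 2 / (4 * M)) →
      Set.InjOn f (closedBall (0:ℂ) r) ∧
      closedBall (0:ℂ) (c * r / 2) ⊆ f '' closedBall (0:ℂ) r :=
  stmt_7_general R M c hR hc f hf hbound hf0 hf'
end

section
/- Let f be holomorphic on {|z| ≤ R} with |f(z)| ≤ M, f(0) = 0, and f'(0) = c > 0. Set r₀ = min{R/2, cR²/(16M)}. Then for every r ≤ r₀ and every z with |z| < r, one has |f'(z)| ≥ c/2. -/
/-!
Subtracting the linear part, `g w = f w - f'(0) w` vanishes to second order at `0`, so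
`g w = w² h w` with `h` holomorphic. The Cauchy estimate gives `|f'(0)| ≤ M / R`, hence `|g| ≤ 2M`
on `|w| = R`, and the maximum modulus principle gives `|h| ≤ 2M / R²` on the disc. A second Cauchy
estimate on the disc of radius `R / 2` around `z` bounds `h'(z)`, and differentiating `w² h w`
yields `|f'(z) - f'(0)| ≤ 6 M |z| / R²`, which is at most `c / 2` for `|z| < r ≤ r₀`.
-/

open Metric Topology

theorem eq_sub_sq_mul_dslope_dslope {𝕜 : Type*} [NontriviallyNormedField 𝕜] {g : 𝕜 → 𝕜}
    {a : 𝕜} (hg : g a = 0) (hg' : deriv g a = 0) (w : 𝕜) :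
    g w = (w - a) ^ 2 * dslope (dslope g a) a w := by
  have h₁ := sub_smul_dslope g a w
  have h₂ := sub_smul_dslope (dslope g a) a w
  rw [dslope_same, hg', sub_zero, smul_eq_mul] at h₂
  rw [hg, sub_zero, smul_eq_mul, ← h₂] at h₁
  rw [← h₁]
  ring

namespace Complex

variable {E : Type*} [NormedAddCommGroup E] [NormedSpace ℂ E]

theorem norm_le_of_forall_mem_sphere_norm_le {u : ℂ → E} {a : ℂ} {R C : ℝ} (hR : 0 < R)
    (hu : DifferentiableOn ℂ u (closedBall a R)) (hC : ∀ w ∈ sphere a R, ‖u w‖ ≤ C) {w : ℂ}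
    (hw : w ∈ closedBall a R) : ‖u w‖ ≤ C := by
  rw [← closure_ball a hR.ne'] at hu hw
  rw [← frontier_ball a hR.ne'] at hC
  exact norm_le_of_forall_mem_frontier_norm_le isBounded_ball hu.diffContOnCl hC hw

theorem norm_deriv_le_of_forall_mem_closedBall_norm_le {u : ℂ → E} {a : ℂ} {R C : ℝ}
    (hR : 0 < R) (hu : DifferentiableOn ℂ u (closedBall a R))
    (hC : ∀ w ∈ closedBall a R, ‖u w‖ ≤ C) : ‖deriv u a‖ ≤ C / R := by
  rw [← closure_ball a hR.ne'] at hu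
  exact norm_deriv_le_of_forall_mem_sphere_norm_le hR hu.diffContOnCl
    fun w hw ↦ hC w (sphere_subset_closedBall hw)

/-- `(f w - f'(0) w) / w²`, extended holomorphically across `0` when `f 0 = 0`. -/
noncomputable def taylorRemainderDivSq (f : ℂ → ℂ) : ℂ → ℂ :=
  dslope (dslope (fun w ↦ f w - deriv f 0 * w) 0) 0

variable {f : ℂ → ℂ} {R M : ℝ}

theorem eq_linear_add_sq_mul_taylorRemainderDivSq (hf0 : f 0 = 0)
    (hfd : DifferentiableAt ℂ f 0) (w : ℂ) :
    f w = deriv f 0 * w + w ^ 2 * taylorRemainderDivSq f w := by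
  have hlin : HasDerivAt (fun w ↦ f w - deriv f 0 * w) (deriv f 0 - deriv f 0 * 1) 0 :=
    hfd.hasDerivAt.sub ((hasDerivAt_id 0).const_mul _)
  have hgw := eq_sub_sq_mul_dslope_dslope (g := fun w ↦ f w - deriv f 0 * w) (a := 0)
    (by simp [hf0]) (by rw [hlin.deriv]; ring) w
  rw [sub_zero] at hgw
  rw [taylorRemainderDivSq, ← hgw]
  ring

theorem differentiableOn_taylorRemainderDivSq {s : Set ℂ} (hs : s ∈ 𝓝 0)
    (hf : DifferentiableOn ℂ f s) : DifferentiableOn ℂ (taylorRemainderDivSq f) s :=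
  (differentiableOn_dslope hs).2 ((differentiableOn_dslope hs).2 (hf.sub (by fun_prop)))

theorem norm_taylorRemainderDivSq_le (hR : 0 < R) (hf : DifferentiableOn ℂ f (closedBall 0 R))
    (hM : ∀ w ∈ closedBall (0 : ℂ) R, ‖f w‖ ≤ M) (hf0 : f 0 = 0) {w : ℂ}
    (hw : w ∈ closedBall (0 : ℂ) R) : ‖taylorRemainderDivSq f w‖ ≤ 2 * M / R ^ 2 := by
  have hnhds : closedBall (0 : ℂ) R ∈ 𝓝 0 := closedBall_mem_nhds 0 hR
  have hcR : ‖deriv f 0‖ * R ≤ M :=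
    (le_div_iff₀ hR).1 (norm_deriv_le_of_forall_mem_closedBall_norm_le hR hf hM)
  refine norm_le_of_forall_mem_sphere_norm_le hR
    (differentiableOn_taylorRemainderDivSq hnhds hf) (fun v hv ↦ ?_) hw
  have hv' : ‖v‖ = R := by simpa using hv
  have hfv := hM v (sphere_subset_closedBall hv)
  have hsq : R ^ 2 * ‖taylorRemainderDivSq f v‖ ≤ 2 * M := by
    calc R ^ 2 * ‖taylorRemainderDivSq f v‖
        = ‖f v - deriv f 0 * v‖ := by
          rw [eq_linear_add_sq_mul_taylorRemainderDivSq hf0 (hf.differentiableAt hnhds) v,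
            add_sub_cancel_left, norm_mul, norm_pow, hv']
      _ ≤ ‖f v‖ + ‖deriv f 0‖ * R := by rw [← hv', ← norm_mul]; exact norm_sub_le _ _
      _ ≤ 2 * M := by linarith
  rwa [le_div_iff₀ (by positivity), mul_comm]

theorem norm_deriv_taylorRemainderDivSq_le (hR : 0 < R)
    (hf : DifferentiableOn ℂ f (closedBall 0 R)) (hM : ∀ w ∈ closedBall (0 : ℂ) R, ‖f w‖ ≤ M)
    (hf0 : f 0 = 0) {z : ℂ} (hz : ‖z‖ ≤ R / 2) :
    ‖deriv (taylorRemainderDivSq f) z‖ ≤ 4 * M / R ^ 3 := by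
  have hsub : closedBall z (R / 2) ⊆ closedBall 0 R :=
    closedBall_subset_closedBall' (by rw [dist_zero_right]; linarith)
  have hq := differentiableOn_taylorRemainderDivSq (closedBall_mem_nhds 0 hR) hf
  have := norm_deriv_le_of_forall_mem_closedBall_norm_le (half_pos hR) (hq.mono hsub)
    fun w hw ↦ norm_taylorRemainderDivSq_le hR hf hM hf0 (hsub hw)
  rwa [show 2 * M / R ^ 2 / (R / 2) = 4 * M / R ^ 3 by field_simp; ring] at this

theorem deriv_sub_deriv_zero_eq (hf0 : f 0 = 0) (hfd : DifferentiableAt ℂ f 0) {z : ℂ}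
    (hq : DifferentiableAt ℂ (taylorRemainderDivSq f) z) :
    deriv f z - deriv f 0 =
      2 * z * taylorRemainderDivSq f z + z ^ 2 * deriv (taylorRemainderDivSq f) z := by
  have hf_eq := funext (eq_linear_add_sq_mul_taylorRemainderDivSq hf0 hfd)
  have hf'z : HasDerivAt (fun w ↦ deriv f 0 * w + w ^ 2 * taylorRemainderDivSq f w) _ z :=
    ((hasDerivAt_id z).const_mul _).add ((hasDerivAt_pow 2 z).mul hq.hasDerivAt)
  rw [hf_eq, hf'z.deriv, ← hf_eq]
  norm_num

theorem norm_deriv_sub_deriv_zero_le (hR : 0 < R) (hf : DifferentiableOn ℂ f (closedBall 0 R))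
    (hM : ∀ w ∈ closedBall (0 : ℂ) R, ‖f w‖ ≤ M) (hf0 : f 0 = 0) {z : ℂ} (hz : ‖z‖ ≤ R / 2) :
    ‖deriv f z - deriv f 0‖ ≤ 6 * M * ‖z‖ / R ^ 2 := by
  have hzR : z ∈ closedBall (0 : ℂ) R := mem_closedBall_zero_iff.2 (by linarith)
  have hq : DifferentiableAt ℂ (taylorRemainderDivSq f) z :=
    (differentiableOn_taylorRemainderDivSq (closedBall_mem_nhds 0 hR) hf).differentiableAt
      (closedBall_mem_nhds_of_mem (by simp; linarith))
  have hM0 : 0 ≤ M := (norm_nonneg _).trans (hM 0 (mem_closedBall_self hR.le))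
  rw [deriv_sub_deriv_zero_eq hf0 (hf.differentiableAt (closedBall_mem_nhds 0 hR)) hq]
  calc _ ≤ 2 * ‖z‖ * (2 * M / R ^ 2) + ‖z‖ ^ 2 * (4 * M / R ^ 3) := by
        refine (norm_add_le _ _).trans ?_
        simp only [norm_mul, norm_pow, norm_ofNat]
        gcongr
        · exact norm_taylorRemainderDivSq_le hR hf hM hf0 hzR
        · exact norm_deriv_taylorRemainderDivSq_le hR hf hM hf0 hz
    _ ≤ 2 * ‖z‖ * (2 * M / R ^ 2) + ‖z‖ * (R / 2) * (4 * M / R ^ 3) := by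
        gcongr
        rw [sq]
        exact mul_le_mul_of_nonneg_left hz (norm_nonneg z)
    _ = 6 * M * ‖z‖ / R ^ 2 := by field_simp; ring

end Complex

theorem stmt_8 (R M c : ℝ) (hR : 0 < R) (hM : 0 < M) (hc : 0 < c)
    (f : ℂ → ℂ) (hf : DifferentiableOn ℂ f (closedBall (0:ℂ) R))
    (hbound : ∀ z ∈ closedBall (0:ℂ) R, ‖f z‖ ≤ M)
    (hf0 : f 0 = 0) (hf' : deriv f 0 = (c : ℂ)) :
    ∀ r : ℝ, 0 < r → r ≤ min (R / 2) (c * R ^ 2 / (16 * M)) →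
      ∀ z ∈ ball (0:ℂ) r, c / 2 ≤ ‖deriv f z‖ := by
  intro r _ hrle z hz
  have hzr : ‖z‖ < r := mem_ball_zero_iff.1 hz
  have hrc : r * (16 * M) ≤ c * R ^ 2 := (le_div_iff₀ (by positivity)).1 (le_min_iff.1 hrle).2
  have hclose := Complex.norm_deriv_sub_deriv_zero_le hR hf hbound hf0
    (hzr.le.trans (le_min_iff.1 hrle).1)
  rw [hf', ← norm_sub_rev] at hclose
  have hsmall : 6 * M * ‖z‖ / R ^ 2 ≤ c / 2 := by
    rw [div_le_iff₀ (by positivity)]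
    nlinarith
  have hnc : ‖(c : ℂ)‖ = c := by simp [hc.le]
  have htri := norm_sub_norm_le (c : ℂ) (deriv f z)
  linarith
end

section
/- Let R, M, c > 0, and let f, g be holomorphic on {|z| ≤ R} with |f|, |g| ≤ M, f(0) = g(0) = 0, f'(0) = g'(0) = c, and suppose |f(z) − g(z)| < ε for all |z| < R. Then there exist ρ > 0 and C > 0 depending only on R, M, c (not on f, g, ε) such that the inverse functions f⁻¹ and g⁻¹ are defined and univalent on {|ζ| ≤ ρ} and max_{|ζ| ≤ ρ} |f⁻¹(ζ) − g⁻¹(ζ)| ≤ C·ε. -/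
/-!
Cauchy's estimate bounds `f'` by `2M/R` on `|z| ≤ R/2`, and Schwarz's lemma applied to `f'`
then gives `|f'(z) - f'(0)| ≤ 8M|z|/R²`. Hence on `|z| ≤ r` with `8Mr/R² ≤ c/2` the map `f`
differs from `z ↦ cz` by a `c/2`-Lipschitz function, so by the contraction argument behind the
inverse function theorem `f` maps `|z| ≤ r` onto a set containing `|ζ| ≤ cr/2`, and
`|f u - f v| ≥ (c/2)|u - v|` there. For `u = f⁻¹ ζ` and `v = g⁻¹ ζ` this gives
`(c/2)|u - v| ≤ |f u - f v| = |g v - f v| < ε`.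
-/

open Metric Set Function ContinuousLinearMap
open scoped NNReal

section BoundedHolomorphic

variable {f : ℂ → ℂ} {a : ℂ} {R M : ℝ}

theorem norm_deriv_le_of_forall_mem_closedBall_norm_le (hR : 0 < R)
    (hf : DifferentiableOn ℂ f (closedBall a R)) (hM : ∀ z ∈ closedBall a R, ‖f z‖ ≤ M)
    {z : ℂ} (hz : z ∈ closedBall a (R / 2)) : ‖deriv f z‖ ≤ 2 * M / R := by
  have hsub : closedBall z (R / 2) ⊆ closedBall a R :=
    closedBall_subset_closedBall' (by rw [mem_closedBall] at hz; linarith)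
  have hd : DiffContOnCl ℂ f (ball z (R / 2)) :=
    (hf.mono <| (closure_ball z (by positivity)).subset.trans hsub).diffContOnCl
  calc ‖deriv f z‖ ≤ M / (R / 2) :=
        Complex.norm_deriv_le_of_forall_mem_sphere_norm_le (half_pos hR) hd
          fun w hw => hM w (hsub (sphere_subset_closedBall hw))
    _ = 2 * M / R := by field_simp

theorem dist_deriv_le_of_forall_mem_closedBall_norm_le (hR : 0 < R)
    (hf : DifferentiableOn ℂ f (closedBall a R)) (hM : ∀ z ∈ closedBall a R, ‖f z‖ ≤ M)
    {z : ℂ} (hz : z ∈ ball a (R / 2)) :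
    dist (deriv f z) (deriv f a) ≤ 8 * M / R ^ 2 * dist z a := by
  have hd : DifferentiableOn ℂ (deriv f) (ball a (R / 2)) :=
    ((hf.mono ball_subset_closedBall).analyticOnNhd isOpen_ball).deriv.differentiableOn.mono
      (ball_subset_ball (by linarith))
  have hmaps : MapsTo (deriv f) (ball a (R / 2)) (closedBall (deriv f a) (4 * M / R)) := by
    intro w hw
    rw [mem_closedBall, dist_eq_norm]
    calc ‖deriv f w - deriv f a‖ ≤ ‖deriv f w‖ + ‖deriv f a‖ := norm_sub_le _ _
      _ ≤ 2 * M / R + 2 * M / R :=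
        add_le_add (norm_deriv_le_of_forall_mem_closedBall_norm_le hR hf hM
            (ball_subset_closedBall hw))
          (norm_deriv_le_of_forall_mem_closedBall_norm_le hR hf hM
            (mem_closedBall_self (by positivity)))
      _ = 4 * M / R := by ring
  calc dist (deriv f z) (deriv f a) ≤ 4 * M / R / (R / 2) * dist z a :=
        Complex.dist_le_div_mul_dist_of_mapsTo_ball hd hmaps hz
    _ = 8 * M / R ^ 2 * dist z a := by field_simp; ring

theorem approximatesLinearOn_closedBall_of_forall_mem_closedBall_norm_le (hR : 0 < R)
    (hf : DifferentiableOn ℂ f (closedBall a R)) (hM : ∀ z ∈ closedBall a R, ‖f z‖ ≤ M)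
    {r : ℝ} {K : ℝ≥0} (hr : r < R / 2) (hK : 8 * M / R ^ 2 * r ≤ K) :
    ApproximatesLinearOn f (smulRight (1 : ℂ →L[ℂ] ℂ) (deriv f a)) (closedBall a r) K := by
  have hM0 : 0 ≤ M := (norm_nonneg _).trans (hM a (mem_closedBall_self hR.le))
  have hsub : closedBall a r ⊆ ball a (R / 2) := closedBall_subset_ball hr
  set h : ℂ → ℂ := fun z => f z - deriv f a * z
  have hderiv : ∀ z ∈ closedBall a r, HasDerivAt h (deriv f z - deriv f a) z := fun z hz =>
    ((hf.differentiableAt (closedBall_mem_nhds_of_mem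
        (ball_subset_ball (by linarith) (hsub hz)))).hasDerivAt).sub
      (by simpa using (hasDerivAt_id z).const_mul (deriv f a))
  intro x hx y hy
  have hbound : ∀ z ∈ closedBall a r, ‖deriv h z‖ ≤ K := fun z hz => by
    rw [(hderiv z hz).deriv, ← dist_eq_norm]
    calc dist (deriv f z) (deriv f a) ≤ 8 * M / R ^ 2 * dist z a :=
          dist_deriv_le_of_forall_mem_closedBall_norm_le hR hf hM (hsub hz)
      _ ≤ 8 * M / R ^ 2 * r := by gcongr; exact hz
      _ ≤ K := hK
  calc ‖f x - f y - smulRight (1 : ℂ →L[ℂ] ℂ) (deriv f a) (x - y)‖ = ‖h x - h y‖ := by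
        simp only [h, smulRight_apply, one_apply_eq_self, smul_eq_mul]; ring_nf
    _ ≤ K * ‖x - y‖ := (convex_closedBall a r).norm_image_sub_le_of_norm_deriv_le
        (fun z hz => (hderiv z hz).differentiableAt) hbound hy hx

end BoundedHolomorphic

section ScalarPerturbation

variable {𝕜 : Type*} [NontriviallyNormedField 𝕜] {f : 𝕜 → 𝕜} {c : 𝕜} {K : ℝ≥0}

theorem ApproximatesLinearOn.mul_norm_sub_le_norm_sub {s : Set 𝕜}
    (hf : ApproximatesLinearOn f (smulRight (1 : 𝕜 →L[𝕜] 𝕜) c) s K) {x y : 𝕜} (hx : x ∈ s)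
    (hy : y ∈ s) : (‖c‖ - K) * ‖x - y‖ ≤ ‖f x - f y‖ := by
  have h := hf x hx y hy
  rw [smulRight_apply, one_apply_eq_self, smul_eq_mul] at h
  calc (‖c‖ - K) * ‖x - y‖ = ‖(x - y) * c‖ - K * ‖x - y‖ := by rw [norm_mul]; ring
    _ ≤ ‖(x - y) * c‖ - ‖f x - f y - (x - y) * c‖ := by gcongr
    _ ≤ ‖f x - f y‖ := by
      linarith [norm_sub_norm_le ((x - y) * c) (f x - f y), norm_sub_rev (f x - f y) ((x - y) * c)]

theorem ApproximatesLinearOn.surjOn_closedBall_of_smulRight [CompleteSpace 𝕜] {a : 𝕜} {r : ℝ}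
    (hf : ApproximatesLinearOn f (smulRight (1 : 𝕜 →L[𝕜] 𝕜) c) (closedBall a r) K)
    (hc : c ≠ 0) (hr : 0 ≤ r) :
    SurjOn f (closedBall a r) (closedBall (f a) ((‖c‖ - K) * r)) := by
  set e := ContinuousLinearEquiv.unitsEquivAut 𝕜 (Units.mk0 c hc)
  have := (show ApproximatesLinearOn f (e : 𝕜 →L[𝕜] 𝕜) (closedBall a r) K from hf
    ).surjOn_closedBall_of_nonlinearRightInverse e.toNonlinearRightInverse hr subset_rfl
  have he : (e.toNonlinearRightInverse.nnnorm : ℝ) = ‖c‖⁻¹ := by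
    change ‖smulRight (1 : 𝕜 →L[𝕜] 𝕜) (((Units.mk0 c hc)⁻¹ : 𝕜ˣ) : 𝕜)‖ = _
    rw [norm_smulRight_apply, norm_one, one_mul, Units.val_inv_eq_inv_val, Units.val_mk0, norm_inv]
  rwa [he, inv_inv] at this

end ScalarPerturbation

theorem surjOn_closedBall_and_mul_norm_sub_le_of_deriv_eq {f : ℂ → ℂ} {R M c r : ℝ}
    (hR : 0 < R) (hf : DifferentiableOn ℂ f (closedBall 0 R))
    (hM : ∀ z ∈ closedBall 0 R, ‖f z‖ ≤ M) (hf0 : f 0 = 0) (hfd : deriv f 0 = c) (hc : 0 < c)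
    (hr : 0 ≤ r) (hrR : r < R / 2) (hrc : 8 * M / R ^ 2 * r ≤ c / 2) :
    SurjOn f (closedBall 0 r) (closedBall 0 (c / 2 * r)) ∧
      ∀ x ∈ closedBall 0 r, ∀ y ∈ closedBall 0 r, c / 2 * ‖x - y‖ ≤ ‖f x - f y‖ := by
  set K : ℝ≥0 := ⟨c / 2, by positivity⟩
  have hcK : ‖(c : ℂ)‖ - K = c / 2 := by
    rw [Complex.norm_real, Real.norm_of_nonneg hc.le]; change c - c / 2 = c / 2; ring
  have hfA : ApproximatesLinearOn f (smulRight (1 : ℂ →L[ℂ] ℂ) (c : ℂ)) (closedBall 0 r) K :=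
    hfd ▸ approximatesLinearOn_closedBall_of_forall_mem_closedBall_norm_le hR hf hM hrR hrc
  refine ⟨?_, fun x hx y hy => hcK ▸ hfA.mul_norm_sub_le_norm_sub hx hy⟩
  simpa only [hf0, hcK] using hfA.surjOn_closedBall_of_smulRight (by exact_mod_cast hc.ne') hr

theorem stmt_9 (R M c : ℝ) (hR : 0 < R) (hM : 0 < M) (hc : 0 < c) :
    ∃ ρ > 0, ∃ C > 0, ∀ (f g : ℂ → ℂ) (ε : ℝ), 0 < ε →
      DifferentiableOn ℂ f (closedBall (0:ℂ) R) →
      DifferentiableOn ℂ g (closedBall (0:ℂ) R) →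
      (∀ z ∈ closedBall (0:ℂ) R, ‖f z‖ ≤ M) →
      (∀ z ∈ closedBall (0:ℂ) R, ‖g z‖ ≤ M) →
      f 0 = 0 → g 0 = 0 → deriv f 0 = (c : ℂ) → deriv g 0 = (c : ℂ) →
      (∀ z ∈ ball (0:ℂ) R, ‖f z - g z‖ < ε) →
      ∃ F G : ℂ → ℂ,
        (∀ ζ ∈ closedBall (0:ℂ) ρ, f (F ζ) = ζ ∧ g (G ζ) = ζ) ∧
        Set.InjOn F (closedBall (0:ℂ) ρ) ∧
        Set.InjOn G (closedBall (0:ℂ) ρ) ∧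
        ∀ ζ ∈ closedBall (0:ℂ) ρ, ‖F ζ - G ζ‖ ≤ C * ε := by
  obtain ⟨r, hr, hrR, hrc⟩ : ∃ r : ℝ, 0 < r ∧ r < R / 2 ∧ 8 * M / R ^ 2 * r ≤ c / 2 := by
    refine ⟨min (R / 4) (c * R ^ 2 / (16 * M)), by positivity,
      (min_le_left _ _).trans_lt (by linarith), ?_⟩
    calc 8 * M / R ^ 2 * min (R / 4) (c * R ^ 2 / (16 * M))
        ≤ 8 * M / R ^ 2 * (c * R ^ 2 / (16 * M)) := by gcongr; exact min_le_right _ _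
      _ = c / 2 := by field_simp; ring
  refine ⟨c / 2 * r, by positivity, 2 / c, by positivity, ?_⟩
  intro f g ε hε hf hg hfM hgM hf0 hg0 hfd hgd hfg
  obtain ⟨hfS, hfA⟩ := surjOn_closedBall_and_mul_norm_sub_le_of_deriv_eq hR hf hfM hf0 hfd hc
    hr.le hrR hrc
  obtain ⟨hgS, -⟩ := surjOn_closedBall_and_mul_norm_sub_le_of_deriv_eq hR hg hgM hg0 hgd hc
    hr.le hrR hrc
  set F := invFunOn f (closedBall 0 r)
  set G := invFunOn g (closedBall 0 r)
  have hF : RightInvOn F f (closedBall 0 (c / 2 * r)) := hfS.rightInvOn_invFunOn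
  have hG : RightInvOn G g (closedBall 0 (c / 2 * r)) := hgS.rightInvOn_invFunOn
  refine ⟨F, G, fun ζ hζ => ⟨hF hζ, hG hζ⟩, LeftInvOn.injOn hF, LeftInvOn.injOn hG,
    fun ζ hζ => ?_⟩
  have hGζ : G ζ ∈ ball 0 R :=
    (closedBall_subset_ball hrR).trans (ball_subset_ball (by linarith)) (hgS.mapsTo_invFunOn hζ)
  have key : c / 2 * ‖F ζ - G ζ‖ ≤ ε :=
    calc c / 2 * ‖F ζ - G ζ‖ ≤ ‖f (F ζ) - f (G ζ)‖ :=
          hfA _ (hfS.mapsTo_invFunOn hζ) _ (hgS.mapsTo_invFunOn hζ)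
      _ = ‖f (G ζ) - g (G ζ)‖ := by rw [hF hζ, hG hζ, norm_sub_rev]
      _ ≤ ε := (hfg _ hGζ).le
  rw [div_mul_eq_mul_div, le_div_iff₀ hc]
  linarith
end

section
/- Let P be a polynomial of degree m ≥ 1 and t ∈ (0,1). Suppose w ≠ 0 and z satisfy m·P(z + t/w) − (1/w)·P'(z + t/w) = 0. Then w satisfies the polynomial equation Σ_{j=0}^{m} (m − j/t) · (P^{(j)}(z)/j!) · t^j · w^{m−j} = 0. -/
/-!
Put `s = t / w`. Multiplying the claimed sum by `w ^ (-m)` turns it into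
`∑ (m - j / t) c_j s ^ j` with `c_j = P^{(j)}(z) / j!` the coefficients of the Taylor
polynomial `Q(s) = P(z + s)`. Since `s Q'(s) = ∑ j c_j s ^ j`, this equals
`m P(z + s) - (s / t) P'(z + s) = m P(z + s) - (1 / w) P'(z + s)`, which vanishes by hypothesis.
-/

open Polynomial

namespace Polynomial

section CommSemiring

variable {R : Type*} [CommSemiring R]

theorem coeff_X_mul_derivative (p : R[X]) (n : ℕ) :
    (X * derivative p).coeff n = n * p.coeff n := by
  cases n with
  | zero => simp
  | succ n => rw [coeff_X_mul, coeff_derivative, mul_comm, Nat.cast_succ]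

theorem natDegree_X_mul_derivative_le (p : R[X]) : (X * derivative p).natDegree ≤ p.natDegree :=
  natDegree_le_iff_coeff_eq_zero.2 fun n hn => by
    rw [coeff_X_mul_derivative, coeff_eq_zero_of_natDegree_lt hn, mul_zero]

theorem derivative_taylor (r : R) (f : R[X]) :
    derivative (taylor r f) = taylor r (derivative f) := by
  simp [taylor_apply, derivative_comp]

end CommSemiring

section Field

variable {K : Type*} [Field K] [CharZero K]

theorem taylor_coeff_eq_iterate_derivative_div_factorial (r : K) (f : K[X]) (j : ℕ) :
    (taylor r f).coeff j = (derivative^[j] f).eval r / j.factorial := by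
  rw [taylor_coeff, ← factorial_smul_hasseDeriv, LinearMap.smul_apply, eval_smul, nsmul_eq_mul,
    mul_div_cancel_left₀ _ (Nat.cast_ne_zero.2 j.factorial_ne_zero)]

theorem sum_range_sub_mul_iterate_derivative_mul_pow {f : K[X]} {n : ℕ} (hf : f.natDegree ≤ n)
    (r s a b : K) :
    ∑ j ∈ Finset.range (n + 1),
        (a - j * b) * ((derivative^[j] f).eval r / j.factorial) * s ^ j =
      a * f.eval (r + s) - b * s * (derivative f).eval (r + s) := by
  set Q := taylor r f
  have hQ : Q.natDegree < n + 1 := by rw [natDegree_taylor]; omega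
  have hXQ : (X * derivative Q).natDegree < n + 1 :=
    (natDegree_X_mul_derivative_le Q).trans_lt hQ
  have hf_eval : f.eval (r + s) = Q.eval s := by rw [taylor_eval, add_comm]
  have hf'_eval : s * (derivative f).eval (r + s) = (X * derivative Q).eval s := by
    rw [eval_mul, eval_X, derivative_taylor, taylor_eval, add_comm]
  rw [mul_assoc b, hf_eval, hf'_eval, eval_eq_sum_range' hQ, eval_eq_sum_range' hXQ,
    Finset.mul_sum, Finset.mul_sum, ← Finset.sum_sub_distrib]
  refine Finset.sum_congr rfl fun j _ => ?_
  rw [coeff_X_mul_derivative, taylor_coeff_eq_iterate_derivative_div_factorial]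
  ring

end Field

end Polynomial

theorem stmt_14_general (P : Polynomial ℂ) (m : ℕ) (hdeg : P.natDegree = m)
    (t : ℝ) (ht : t ∈ Set.Ioo (0:ℝ) 1) (z w : ℂ) (hw : w ≠ 0)
    (h : (m : ℂ) * P.eval (z + (t : ℂ) / w) -
        (1 / w) * P.derivative.eval (z + (t : ℂ) / w) = 0) :
    ∑ j ∈ Finset.range (m + 1),
      ((m : ℂ) - (j : ℂ) / (t : ℂ)) *
        (((Polynomial.derivative^[j] P).eval z) / (Nat.factorial j : ℂ)) *
        (t : ℂ) ^ j * w ^ (m - j) = 0 := by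
  have ht0 : (t : ℂ) ≠ 0 := Complex.ofReal_ne_zero.2 ht.1.ne'
  calc _ = w ^ m * ∑ j ∈ Finset.range (m + 1), ((m : ℂ) - j * (t : ℂ)⁻¹) *
          ((derivative^[j] P).eval z / j.factorial) * ((t : ℂ) / w) ^ j := by
        rw [Finset.mul_sum]
        refine Finset.sum_congr rfl fun j hj => ?_
        rw [pow_sub₀ w hw (Finset.mem_range_succ_iff.1 hj), div_pow]
        field_simp
    _ = w ^ m * ((m : ℂ) * P.eval (z + (t : ℂ) / w) -
          (1 / w) * P.derivative.eval (z + (t : ℂ) / w)) := by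
        rw [sum_range_sub_mul_iterate_derivative_mul_pow hdeg.le]
        field_simp
    _ = 0 := by rw [h, mul_zero]

theorem stmt_14 (P : Polynomial ℂ) (m : ℕ) (hm : 1 ≤ m) (hdeg : P.natDegree = m)
    (t : ℝ) (ht : t ∈ Set.Ioo (0:ℝ) 1) (z w : ℂ) (hw : w ≠ 0)
    (h : (m : ℂ) * P.eval (z + (t : ℂ) / w) -
        (1 / w) * P.derivative.eval (z + (t : ℂ) / w) = 0) :
    ∑ j ∈ Finset.range (m + 1),
      ((m : ℂ) - (j : ℂ) / (t : ℂ)) *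
        (((Polynomial.derivative^[j] P).eval z) / (Nat.factorial j : ℂ)) *
        (t : ℂ) ^ j * w ^ (m - j) = 0 :=
  stmt_14_general P m hdeg t ht z w hw h
end

section
/- Let μ be a positive probability measure on ℂ with supp(μ) ⊂ {|z| < r}, let 0 < T < 1, and let R > max{2r, r(1+r), (1+r)(1+T)/(1−T)}. Then for every z with 0 < |z| < 1/(2R) and every t ∈ [0,T], the equation z − s − z·s·t/f₁(s) = 0, where f₁(s) = ∫ s/(1 − sy) dμ(y), has exactly one solution s in the disk {|s| < 1/R}. -/
open MeasureTheory Metric Set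

/-- Re((1-w)⁻¹) ≥ 1/(1+q) when ‖w‖ ≤ q < 1. -/
lemma aux_re_inv (w : ℂ) (q : ℝ) (hq : 0 ≤ q) (hq1 : q < 1) (hw : ‖w‖ ≤ q) :
    1/(1+q) ≤ ((1-w)⁻¹).re := by
  have hre : |w.re| ≤ ‖w‖ := Complex.abs_re_le_norm w
  have hsq : Complex.normSq w = ‖w‖^2 := (Complex.sq_norm w).symm
  have hns : Complex.normSq (1-w) = 1 - 2*w.re + Complex.normSq w := by
    simp [Complex.normSq_apply]; ring
  have hpos : 0 < Complex.normSq (1-w) := by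
    rw [hns, hsq]; nlinarith [abs_le.mp hre, norm_nonneg w]
  rw [Complex.inv_re, hns]
  rw [div_le_div_iff₀ (by positivity) (by rw [hns] at hpos; exact hpos)]
  have h1 : (1-w).re = 1 - w.re := by simp
  rw [h1, hsq]
  nlinarith [abs_le.mp hre, norm_nonneg w]

lemma aux_norm_one_sub (w : ℂ) (q : ℝ) (hw : ‖w‖ ≤ q) : 1 - q ≤ ‖1 - w‖ := by
  have h1 : ‖(1:ℂ)‖ = 1 := by simp
  have := norm_sub_norm_le (1:ℂ) w
  rw [h1] at this; linarith

lemma aux_alg1 (z t a b : ℂ) (ha : a ≠ 0) (hb : b ≠ 0) :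
    (z - z*t/a) - (z - z*t/b) = z*t*(a-b) * (a⁻¹*b⁻¹) := by
  field_simp
  ring

lemma aux_alg2 (z t s a : ℂ) (hs : s ≠ 0) (ha : a ≠ 0) :
    z - s - z * s * t / (s * a) = (z - z*t/a) - s := by
  field_simp
  ring

set_option maxHeartbeats 1000000 in
theorem stmt_17 (r T R : ℝ) (hr : 0 < r) (hT : T ∈ Ioo (0:ℝ) 1)
    (hR : max (max (2 * r) (r * (1 + r))) ((1 + r) * (1 + T) / (1 - T)) < R)
    (μ : Measure ℂ) [IsProbabilityMeasure μ]
    (hsupp : μ (Metric.ball (0 : ℂ) r)ᶜ = 0) :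
    ∀ z : ℂ, 0 < ‖z‖ → ‖z‖ < 1 / (2 * R) → ∀ t ∈ Icc (0:ℝ) T,
      ∃! s : ℂ, ‖s‖ < 1 / R ∧
        z - s - z * s * (t : ℂ) / (∫ y, s * (1 - s * y)⁻¹ ∂μ) = 0 := by
  obtain ⟨hT0, hT1⟩ := hT
  have h2r : 2*r < R :=
    lt_of_le_of_lt ((le_max_left _ _).trans (le_max_left _ _)) hR
  have hr1 : r*(1+r) < R :=
    lt_of_le_of_lt ((le_max_right _ _).trans (le_max_left _ _)) hR
  have hTRdiv : (1+r)*(1+T)/(1-T) < R := lt_of_le_of_lt (le_max_right _ _) hR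
  have h1T : (0:ℝ) < 1 - T := by linarith
  have hRpos : 0 < R := by linarith
  have h1 : (1+r)*(1+T) < R*(1-T) := by
    rw [div_lt_iff₀ h1T] at hTRdiv; linarith
  -- key inequality: T(R-r) < R-2r
  have hkey : T*(R-r) < R-2*r := by
    rcases le_or_gt (r*(1-T)) 1 with h | h
    · nlinarith
    · nlinarith [mul_pos hr (sub_pos.mpr h)]
  -- polynomial inequality for contraction
  have hpoly : r*(R-2*r)*(R+r)^2 ≤ 2*R*(R-r)^3 := by
    nlinarith [sq_nonneg (R-2*r), sq_nonneg (R-3*r), sq_nonneg (R*R - 3*r*R + r*r),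
      mul_pos hr (sub_pos.mpr h2r), sq_nonneg r, sq_nonneg R, sq_nonneg (r*(R-2*r)),
      mul_nonneg (mul_nonneg hr.le hr.le) (sub_pos.mpr h2r).le]
  set q : ℝ := r / R with hqdef
  have hq0 : 0 < q := by positivity
  have hq2 : q < 1/2 := by rw [hqdef, div_lt_iff₀ hRpos]; linarith
  have hq1 : q < 1 := by linarith
  have h1q : (0:ℝ) < 1 - q := by linarith
  have h1q' : (0:ℝ) < 1 + q := by linarith
  have hae : ∀ᵐ y ∂μ, ‖y‖ < r := by
    rw [ae_iff]
    have : {y : ℂ | ¬ ‖y‖ < r} = (Metric.ball (0:ℂ) r)ᶜ := by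
      ext y; simp [Metric.mem_ball, dist_zero_right]
    rw [this]; exact hsupp
  set ρ : ℝ := 1/R with hρ
  have hρpos : 0 < ρ := by positivity
  intro z hz hzR t ht
  obtain ⟨ht0, htT⟩ := ht
  have ht1 : t < 1 := lt_of_le_of_lt htT hT1
  set g : ℂ → ℂ := fun s => ∫ y, (1 - s*y)⁻¹ ∂μ with hgdef
  have hmeas : ∀ s : ℂ, AEStronglyMeasurable (fun y => (1 - s*y)⁻¹) μ := fun s =>
    (Measurable.inv (measurable_const.sub (measurable_id.const_mul s))).aestronglyMeasurable
  -- basic pointwise bound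
  have hw : ∀ s : ℂ, ‖s‖ ≤ ρ → ∀ y : ℂ, ‖y‖ < r → ‖s * y‖ ≤ q := by
    intro s hs y hy
    rw [norm_mul]
    calc ‖s‖ * ‖y‖ ≤ ρ * r := by
          apply mul_le_mul hs hy.le (norm_nonneg _) hρpos.le
      _ = q := by rw [hρ, hqdef]; field_simp
  have hone : ∀ w : ℂ, ‖w‖ ≤ q → (1 - w) ≠ 0 := by
    intro w hwq h
    have := aux_norm_one_sub w q hwq
    rw [h] at this; simp at this; linarith
  have hinv_le : ∀ w : ℂ, ‖w‖ ≤ q → ‖(1-w)⁻¹‖ ≤ (1-q)⁻¹ := by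
    intro w hwq
    rw [norm_inv]
    apply inv_anti₀ h1q (aux_norm_one_sub w q hwq)
  -- integrability
  have hint : ∀ s : ℂ, ‖s‖ ≤ ρ → Integrable (fun y => (1 - s*y)⁻¹) μ := by
    intro s hs
    apply Integrable.mono' (integrable_const ((1-q)⁻¹)) (hmeas s)
    filter_upwards [hae] with y hy
    exact hinv_le _ (hw s hs y hy)
  -- real part lower bound for g
  have hgre : ∀ s : ℂ, ‖s‖ ≤ ρ → 1/(1+q) ≤ (g s).re := by
    intro s hs
    have hre : (g s).re = ∫ y, ((1 - s*y)⁻¹).re ∂μ := by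
      have := integral_re (𝕜 := ℂ) (hint s hs)
      simpa [hgdef] using this.symm
    rw [hre]
    have hc : (1/(1+q)) = ∫ (_ : ℂ), (1/(1+q)) ∂μ := by simp
    rw [hc]
    apply integral_mono_ae (integrable_const _) (hint s hs).re
    filter_upwards [hae] with y hy
    exact aux_re_inv _ q hq0.le hq1 (hw s hs y hy)
  have hgnorm : ∀ s : ℂ, ‖s‖ ≤ ρ → (1+q)⁻¹ ≤ ‖g s‖ := by
    intro s hs
    have h1 := hgre s hs
    have h2 : (g s).re ≤ |(g s).re| := le_abs_self _
    have h3 : |(g s).re| ≤ ‖g s‖ := Complex.abs_re_le_norm _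
    rw [one_div] at h1; linarith
  have hgne : ∀ s : ℂ, ‖s‖ ≤ ρ → g s ≠ 0 := by
    intro s hs h
    have := hgnorm s hs
    rw [h] at this; simp at this
    nlinarith [inv_pos.mpr h1q']
  have hginv : ∀ s : ℂ, ‖s‖ ≤ ρ → ‖(g s)⁻¹‖ ≤ 1 + q := by
    intro s hs
    rw [norm_inv]
    rw [inv_le_comm₀ (lt_of_lt_of_le (inv_pos.mpr h1q') (hgnorm s hs)) h1q']
    exact hgnorm s hs
  -- Lipschitz bound for g
  have hgdiff : ∀ s₁ s₂ : ℂ, ‖s₁‖ ≤ ρ → ‖s₂‖ ≤ ρ →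
      ‖g s₁ - g s₂‖ ≤ r/(1-q)^2 * ‖s₁ - s₂‖ := by
    intro s₁ s₂ h₁ h₂
    have hsub : g s₁ - g s₂ = ∫ y, ((1 - s₁*y)⁻¹ - (1 - s₂*y)⁻¹) ∂μ :=
      (integral_sub (hint s₁ h₁) (hint s₂ h₂)).symm
    rw [hsub]
    have : r/(1-q)^2 * ‖s₁ - s₂‖ = ∫ (_ : ℂ), r/(1-q)^2 * ‖s₁ - s₂‖ ∂μ := by simp
    rw [this]
    apply norm_integral_le_of_norm_le (integrable_const _)
    filter_upwards [hae] with y hy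
    have hw1 := hw s₁ h₁ y hy
    have hw2 := hw s₂ h₂ y hy
    have hne1 := hone _ hw1
    have hne2 := hone _ hw2
    have key : (1 - s₁*y)⁻¹ - (1 - s₂*y)⁻¹
        = ((s₁-s₂)*y) * ((1 - s₁*y)⁻¹ * (1 - s₂*y)⁻¹) := by
      rw [inv_sub_inv hne1 hne2, div_eq_mul_inv, mul_inv]
      ring
    rw [key]
    calc ‖(s₁-s₂)*y * ((1 - s₁*y)⁻¹ * (1 - s₂*y)⁻¹)‖
        = ‖s₁-s₂‖ * ‖y‖ * (‖(1 - s₁*y)⁻¹‖ * ‖(1 - s₂*y)⁻¹‖) := by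
          rw [norm_mul, norm_mul, norm_mul]
      _ ≤ ‖s₁-s₂‖ * r * ((1-q)⁻¹ * (1-q)⁻¹) := by
          gcongr <;> first
            | exact hy.le | exact hinv_le _ hw1 | exact hinv_le _ hw2
      _ = r/(1-q)^2 * ‖s₁ - s₂‖ := by
          rw [sq]; field_simp
  set F : ℂ → ℂ := fun s => z - z*(t:ℂ)/(g s) with hFdef
  have htnorm : ‖(t:ℂ)‖ = t := by
    rw [Complex.norm_real, Real.norm_eq_abs, abs_of_nonneg ht0]
  have hT1q : T * (1+q) < 1 := by
    have h : T*(R+r) < R := by nlinarith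
    have : 1 + q = (R+r)/R := by rw [hqdef]; field_simp
    rw [this, ← mul_div_assoc, div_lt_one hRpos]; linarith [h]
  -- F maps the closed ball into the open ball
  have hFmap : ∀ s : ℂ, ‖s‖ ≤ ρ → ‖F s‖ < ρ := by
    intro s hs
    have h1 : ‖F s‖ ≤ ‖z‖ + ‖z‖ * t * (1+q) := by
      calc ‖F s‖ ≤ ‖z‖ + ‖z*(t:ℂ)/(g s)‖ := norm_sub_le _ _
        _ = ‖z‖ + ‖z‖ * t * ‖(g s)⁻¹‖ := by
            rw [div_eq_mul_inv, norm_mul, norm_mul, htnorm]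
        _ ≤ ‖z‖ + ‖z‖ * t * (1+q) := by
            gcongr
            exact hginv s hs
    have h2 : ‖z‖ * t * (1+q) ≤ ‖z‖ * (T * (1+q)) := by
      rw [mul_assoc]
      gcongr
    have h3 : ‖z‖ * (T*(1+q)) < ‖z‖ := by
      have := mul_lt_mul_of_pos_left hT1q hz
      simpa using this
    have h4 : (2:ℝ) * ‖z‖ < ρ := by
      have e : 2*(1/(2*R)) = ρ := by rw [hρ]; field_simp
      linarith
    linarith
  -- contraction constant
  set Kc : ℝ := ‖z‖ * T * r * (1+q)^2/(1-q)^2 with hKcdef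
  have hKc0 : 0 ≤ Kc := by positivity
  have hcontr : ∀ s₁ s₂ : ℂ, ‖s₁‖ ≤ ρ → ‖s₂‖ ≤ ρ →
      ‖F s₁ - F s₂‖ ≤ Kc * ‖s₁ - s₂‖ := by
    intro s₁ s₂ h₁ h₂
    have hg1 := hgne s₁ h₁
    have hg2 := hgne s₂ h₂
    have key : F s₁ - F s₂ = z*(t:ℂ)*(g s₁ - g s₂) * ((g s₁)⁻¹ * (g s₂)⁻¹) :=
      aux_alg1 z t (g s₁) (g s₂) hg1 hg2
    rw [key]
    calc ‖z*(t:ℂ)*(g s₁ - g s₂) * ((g s₁)⁻¹ * (g s₂)⁻¹)‖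
        = ‖z‖ * t * ‖g s₁ - g s₂‖ * (‖(g s₁)⁻¹‖ * ‖(g s₂)⁻¹‖) := by
          rw [norm_mul, norm_mul, norm_mul, norm_mul, htnorm]
      _ ≤ ‖z‖ * T * (r/(1-q)^2 * ‖s₁ - s₂‖) * ((1+q) * (1+q)) := by
          gcongr <;> first
            | exact htT | exact hgdiff s₁ s₂ h₁ h₂ | exact hginv _ h₁ | exact hginv _ h₂
      _ = Kc * ‖s₁ - s₂‖ := by rw [hKcdef]; field_simp
  have hKc : Kc < 1 := by
    have hA : T*r*(R+r)^2 < 2*R*(R-r)^2 := by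
      have t1 : T*(R-r)*(r*(R+r)^2) < (R-2*r)*(r*(R+r)^2) :=
        mul_lt_mul_of_pos_right hkey (by positivity)
      have hRr : 0 < R - r := by linarith
      nlinarith [t1, hpoly]
    have hApos : 0 < T*r*(R+r)^2 := by positivity
    have hB : ‖z‖*(T*r*(R+r)^2) < (R-r)^2 := by
      calc ‖z‖*(T*r*(R+r)^2) < (1/(2*R))*(2*R*(R-r)^2) :=
            mul_lt_mul'' hzR hA (norm_nonneg z) hApos.le
        _ = (R-r)^2 := by field_simp
    have e1 : (1:ℝ) + q = (R+r)/R := by rw [hqdef]; field_simp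
    have e2 : (1:ℝ) - q = (R-r)/R := by rw [hqdef]; field_simp
    rw [hKcdef, div_lt_one (by positivity), e1, e2, div_pow, div_pow]
    have e3 : ‖z‖*T*r*((R+r)^2/R^2) = (‖z‖*(T*r*(R+r)^2))/R^2 := by ring
    rw [e3, div_lt_div_iff₀ (by positivity) (by positivity)]
    nlinarith [mul_lt_mul_of_pos_right hB (by positivity : (0:ℝ) < R^2)]
  -- Banach fixed point on the closed ball
  haveI : CompleteSpace (closedBall (0:ℂ) ρ) := (Metric.isClosed_closedBall).completeSpace_coe
  haveI : Nonempty (closedBall (0:ℂ) ρ) := ⟨⟨0, mem_closedBall_self hρpos.le⟩⟩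
  set Fb : closedBall (0:ℂ) ρ → closedBall (0:ℂ) ρ :=
    fun s => ⟨F s, mem_closedBall_zero_iff.mpr (hFmap s (mem_closedBall_zero_iff.mp s.2)).le⟩
    with hFbdef
  set K' : NNReal := ⟨Kc, hKc0⟩ with hK'def
  have hK'coe : (K' : ℝ) = Kc := rfl
  have hCW : ContractingWith K' Fb := by
    constructor
    · rw [← NNReal.coe_lt_coe, hK'coe, NNReal.coe_one]; exact hKc
    · apply LipschitzWith.of_dist_le_mul
      intro s₁ s₂
      rw [Subtype.dist_eq, Subtype.dist_eq, dist_eq_norm, dist_eq_norm, hK'coe]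
      exact hcontr s₁ s₂ (mem_closedBall_zero_iff.mp s₁.2) (mem_closedBall_zero_iff.mp s₂.2)
  set s₀ : ℂ := ((ContractingWith.fixedPoint Fb hCW : closedBall (0:ℂ) ρ) : ℂ) with hs₀def
  have hs₀mem : ‖s₀‖ ≤ ρ :=
    mem_closedBall_zero_iff.mp (ContractingWith.fixedPoint Fb hCW).2
  have hfix : F s₀ = s₀ := congrArg Subtype.val hCW.fixedPoint_isFixedPt
  have hg0 : g 0 = 1 := by rw [hgdef]; simp
  have hzne : z ≠ 0 := by intro h; rw [h] at hz; simp at hz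
  have htne : (1:ℂ) - (t:ℂ) ≠ 0 := by
    intro h
    have h' : (t:ℂ) = 1 := by linear_combination -h
    have : t = 1 := by exact_mod_cast h'
    linarith
  have hs₀ne : s₀ ≠ 0 := by
    intro h
    rw [h] at hfix
    have hfix0 : z - z*(t:ℂ)/(g 0) = 0 := hfix
    rw [hg0, div_one] at hfix0
    have : z * (1 - (t:ℂ)) = 0 := by linear_combination hfix0
    rcases mul_eq_zero.mp this with h'|h'
    · exact hzne h'
    · exact htne h'
  -- equation is equivalent to being a fixed point of F
  have hiff : ∀ s : ℂ, ‖s‖ ≤ ρ → s ≠ 0 →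
      ((z - s - z * s * (t : ℂ) / (∫ y, s * (1 - s * y)⁻¹ ∂μ) = 0) ↔ F s = s) := by
    intro s hs hs0
    have hmul : ∫ y, s * (1 - s*y)⁻¹ ∂μ = s * g s := integral_const_mul s _
    have hgns := hgne s hs
    have hid : z - s - z * s * (t:ℂ) / (s * g s) = F s - s :=
      aux_alg2 z t s (g s) hs0 hgns
    rw [hmul, hid, sub_eq_zero]
  refine ⟨s₀, ⟨?_, ?_⟩, ?_⟩
  · rw [← hfix]
    exact hFmap s₀ hs₀mem
  · exact (hiff s₀ hs₀mem hs₀ne).mpr hfix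
  · rintro s ⟨hslt, hseq⟩
    have hsρ : ‖s‖ ≤ ρ := hslt.le
    have hs0 : s ≠ 0 := by
      intro h
      rw [h] at hseq
      simp at hseq
      exact hzne hseq
    have hfs : F s = s := (hiff s hsρ hs0).mp hseq
    have hd := hcontr s s₀ hsρ hs₀mem
    rw [hfs, hfix] at hd
    by_cases hne : s = s₀
    · exact hne
    · exfalso
      have hpos : 0 < ‖s - s₀‖ := by
        rw [norm_pos_iff]; exact sub_ne_zero.mpr hne
      have hlt := mul_lt_mul_of_pos_right hKc hpos
      rw [one_mul] at hlt
      linarith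
end
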